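/- arXiv:2209.00013 — 7 statements merged into one kernel-verified Lean document; each statement's English description precedes it below -/
import Mathlib

section
/- Let d ≥ 2 be an integer, L > 0, k a real constant, U ⊆ ℝ² open, and f, r : U → ℝ twice continuously differentiable with r > 0 on U. Suppose the continuous functions T₊₊, T₋₋, T₊₋ : U → ℝ satisfy the reduced Einstein equations: r·T₊₊/(d−1) = −(∂₊f)(∂₊r) − ∂₊∂₊r, r·T₋₋/(d−1) = −(∂₋f)(∂₋r) − ∂₋∂₋r, and r·T₊₋/(d−1) = ∂₊∂₋r + ((d−2)/r)[ (e^{−f}/2)(k + r²/L²) + (∂₊r)(∂₋r) ] + (r/L²)e^{−f}. Define the null expansions θ± = (d−1)∂±r/r and the mass function μ = k r^{d−2} + 2 e^{f} r^{d−2} (∂₊r)(∂₋r) + r^{d}/L². Then on U one has the identities ∂₊μ = (2 e^{f} r^{d}/(d−1)²)(T₊₋ θ₊ − θ₋ T₊₊) and ∂₋μ = (2 e^{f} r^{d}/(d−1)²)(T₊₋ θ₋ − θ₊ T₋₋). -/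
/-!
Differentiate `μ` along a null direction `v`, with `w` the other one, by the product and chain
rules. The second derivatives `∂ᵥ∂ᵥr` and `∂ᵥ∂_w r` that appear are eliminated with the `vv`- and
`vw`-components of the Einstein equations, and what is left is an identity of rational functions.
The `∂₋` identity is the `∂₊` one with `v` and `w` exchanged; matching it with the `T₊₋` equation
needs the symmetry of the mixed second derivative of `r`, which holds as `r` is `C²`.
-/

/-- Partial derivative in the `x⁺` (first coordinate) direction. -/
noncomputable def dplus (g : ℝ × ℝ → ℝ) (x : ℝ × ℝ) : ℝ := fderiv ℝ g x (1, 0)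

/-- Partial derivative in the `x⁻` (second coordinate) direction. -/
noncomputable def dminus (g : ℝ × ℝ → ℝ) (x : ℝ × ℝ) : ℝ := fderiv ℝ g x (0, 1)

open Real

theorem fderiv_fderiv_apply_const {𝕜 E F : Type*} [NontriviallyNormedField 𝕜]
    [NormedAddCommGroup E] [NormedSpace 𝕜 E] [NormedAddCommGroup F] [NormedSpace 𝕜 F]
    {g : E → F} {x : E} (h : DifferentiableAt 𝕜 (fderiv 𝕜 g) x) (v w : E) :
    fderiv 𝕜 (fun y => fderiv 𝕜 g y w) x v = fderiv 𝕜 (fderiv 𝕜 g) x v w := by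
  simp [fderiv_clm_apply h (differentiableAt_const w)]

/-- Here `n = d - 2`, `c = 1 / L²`, and `v`, `w` are the two null directions. -/
theorem fderiv_mass_apply (n : ℕ) (k c : ℝ) {f r : ℝ × ℝ → ℝ} {x : ℝ × ℝ} (v w : ℝ × ℝ)
    (hf : DifferentiableAt ℝ f x) (hr : DifferentiableAt ℝ r x)
    (hr' : DifferentiableAt ℝ (fderiv ℝ r) x) :
    fderiv ℝ (fun y => k * r y ^ n + 2 * exp (f y) * r y ^ n * fderiv ℝ r y v * fderiv ℝ r y w
      + c * r y ^ (n + 2)) x v =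
      n * r x ^ (n - 1) * fderiv ℝ r x v * (k + 2 * exp (f x) * fderiv ℝ r x v * fderiv ℝ r x w)
      + 2 * exp (f x) * r x ^ n * (fderiv ℝ f x v * fderiv ℝ r x v * fderiv ℝ r x w
        + fderiv ℝ (fderiv ℝ r) x v v * fderiv ℝ r x w
        + fderiv ℝ r x v * fderiv ℝ (fderiv ℝ r) x v w)
      + c * (n + 2) * r x ^ (n + 1) * fderiv ℝ r x v := by
  have hDr (u : ℝ × ℝ) : HasFDerivAt (fun y => fderiv ℝ r y u)
      ((ContinuousLinearMap.apply ℝ ℝ u).comp (fderiv ℝ (fderiv ℝ r) x)) x :=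
    (ContinuousLinearMap.apply ℝ ℝ u).hasFDerivAt.comp x hr'.hasFDerivAt
  have hμ : HasFDerivAt (fun y => k * r y ^ n
      + 2 * exp (f y) * r y ^ n * fderiv ℝ r y v * fderiv ℝ r y w + c * r y ^ (n + 2)) _ x :=
    ((hr.hasFDerivAt.pow n).const_mul k).add
    ((((hf.hasFDerivAt.exp.const_mul 2).mul (hr.hasFDerivAt.pow n)).mul (hDr v)).mul (hDr w))
    |>.add ((hr.hasFDerivAt.pow (n + 2)).const_mul c)
  rw [hμ.fderiv]
  simp only [add_apply, smul_apply, Pi.mul_apply,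
    ContinuousLinearMap.comp_apply, ContinuousLinearMap.apply_apply, smul_eq_mul]
  push_cast
  ring

theorem mass_derivative_algebra (n : ℕ) {r e rv rw fv rvv rvw k c Tvv Tvw : ℝ} (hr : r ≠ 0)
    (he : e ≠ 0) (hvv : r * Tvv / ((n : ℝ) + 1) = -fv * rv - rvv)
    (hvw : r * Tvw / ((n : ℝ) + 1) =
      rvw + n / r * (e⁻¹ / 2 * (k + c * r ^ 2) + rv * rw) + c * r * e⁻¹) :
    n * r ^ (n - 1) * rv * (k + 2 * e * rv * rw)
      + 2 * e * r ^ n * (fv * rv * rw + rvv * rw + rv * rvw) + c * (n + 2) * r ^ (n + 1) * rv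
    = 2 * e * r ^ (n + 2) / ((n : ℝ) + 1) ^ 2 *
      (Tvw * ((n + 1) * rv / r) - (n + 1) * rw / r * Tvv) := by
  have hpow : (n : ℝ) * r ^ (n - 1) = n * r ^ n / r := by
    rcases Nat.eq_zero_or_pos n with rfl | hn
    · simp
    · rw [← mul_pow_sub_one hn.ne' r]; field_simp
  have hTvv : Tvv = (n + 1) * (-fv * rv - rvv) / r := by field_simp at hvv ⊢; linarith
  have hTvw :
      Tvw = (n + 1) * (rvw + n / r * (e⁻¹ / 2 * (k + c * r ^ 2) + rv * rw) + c * r * e⁻¹) / r := by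
    field_simp at hvw ⊢; linarith
  rw [hTvv, hTvw, hpow, pow_succ, pow_succ, pow_succ]
  field_simp
  ring

theorem fderiv_mass_apply_of_einstein {d : ℕ} (hd : 2 ≤ d) {k c : ℝ} {f r μ : ℝ × ℝ → ℝ}
    {x v w : ℝ × ℝ} {Tvv Tvw : ℝ}
    (hf : DifferentiableAt ℝ f x) (hr : DifferentiableAt ℝ r x)
    (hr' : DifferentiableAt ℝ (fderiv ℝ r) x) (hrx : r x ≠ 0)
    (hμ : ∀ y, μ y = k * r y ^ (d - 2)
      + 2 * exp (f y) * r y ^ (d - 2) * fderiv ℝ r y v * fderiv ℝ r y w + c * r y ^ d)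
    (hvv : r x * Tvv / ((d : ℝ) - 1) =
      -fderiv ℝ f x v * fderiv ℝ r x v - fderiv ℝ (fderiv ℝ r) x v v)
    (hvw : r x * Tvw / ((d : ℝ) - 1) = fderiv ℝ (fderiv ℝ r) x v w
      + ((d : ℝ) - 2) / r x *
        (exp (-f x) / 2 * (k + c * r x ^ 2) + fderiv ℝ r x v * fderiv ℝ r x w)
      + c * r x * exp (-f x)) :
    fderiv ℝ μ x v = 2 * exp (f x) * r x ^ d / ((d : ℝ) - 1) ^ 2 *
      (Tvw * (((d : ℝ) - 1) * fderiv ℝ r x v / r x)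
        - ((d : ℝ) - 1) * fderiv ℝ r x w / r x * Tvv) := by
  obtain ⟨n, rfl⟩ : ∃ n, d = n + 2 := ⟨d - 2, by omega⟩
  obtain rfl : μ = fun y => k * r y ^ n
      + 2 * exp (f y) * r y ^ n * fderiv ℝ r y v * fderiv ℝ r y w + c * r y ^ (n + 2) := by
    simpa using funext hμ
  rw [exp_neg] at hvw
  push_cast at hvv hvw ⊢
  rw [fderiv_mass_apply n k c v w hf hr hr', show (n : ℝ) + 2 - 1 = n + 1 by ring]
  exact mass_derivative_algebra n hrx (exp_pos _).ne' (by linear_combination hvv)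
    (by linear_combination hvw)

theorem mass_derivative_identities_general
    (d : ℕ) (hd : 2 ≤ d) (L k : ℝ)
    (U : Set (ℝ × ℝ)) (hU : IsOpen U)
    (f r : ℝ × ℝ → ℝ)
    (hf : ContDiffOn ℝ 2 f U) (hr : ContDiffOn ℝ 2 r U)
    (hrpos : ∀ x ∈ U, 0 < r x)
    (Tpp Tmm Tpm : ℝ × ℝ → ℝ)
    (hEpp : ∀ x ∈ U, r x * Tpp x / ((d : ℝ) - 1) =
      -(dplus f x) * dplus r x - dplus (dplus r) x)
    (hEmm : ∀ x ∈ U, r x * Tmm x / ((d : ℝ) - 1) =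
      -(dminus f x) * dminus r x - dminus (dminus r) x)
    (hEpm : ∀ x ∈ U, r x * Tpm x / ((d : ℝ) - 1) =
      dplus (dminus r) x + (((d : ℝ) - 2) / r x) *
        (Real.exp (-(f x)) / 2 * (k + r x ^ 2 / L ^ 2) + dplus r x * dminus r x)
      + (r x / L ^ 2) * Real.exp (-(f x)))
    (μ : ℝ × ℝ → ℝ)
    (hμ : ∀ x, μ x = k * r x ^ (d - 2)
      + 2 * Real.exp (f x) * r x ^ (d - 2) * dplus r x * dminus r x
      + r x ^ d / L ^ 2) :
    ∀ x ∈ U,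
      dplus μ x = (2 * Real.exp (f x) * r x ^ d / ((d : ℝ) - 1) ^ 2) *
        (Tpm x * (((d : ℝ) - 1) * dplus r x / r x)
          - (((d : ℝ) - 1) * dminus r x / r x) * Tpp x) ∧
      dminus μ x = (2 * Real.exp (f x) * r x ^ d / ((d : ℝ) - 1) ^ 2) *
        (Tpm x * (((d : ℝ) - 1) * dminus r x / r x)
          - (((d : ℝ) - 1) * dplus r x / r x) * Tmm x) := by
  intro x hx
  have hr2 : ContDiffAt ℝ 2 r x := hr.contDiffAt (hU.mem_nhds hx)
  have hf1 : DifferentiableAt ℝ f x :=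
    (hf.contDiffAt (hU.mem_nhds hx)).differentiableAt (by norm_num)
  have hr1 : DifferentiableAt ℝ r x := hr2.differentiableAt (by norm_num)
  have hr' : DifferentiableAt ℝ (fderiv ℝ r) x :=
    (hr2.fderiv_right (m := 1) le_rfl).differentiableAt one_ne_zero
  have hmixed := (hr2.isSymmSndFDerivAt (by simp)).eq (0, 1) (1, 0)
  have hpp := hEpp x hx
  have hmm := hEmm x hx
  have hpm := hEpm x hx
  unfold dplus at hpp hpm hμ ⊢
  unfold dminus at hmm hpm hμ ⊢
  simp only [fderiv_fderiv_apply_const hr'] at hpp hmm hpm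
  constructor
  · exact fderiv_mass_apply_of_einstein hd hf1 hr1 hr' (hrpos x hx).ne' (c := (L ^ 2)⁻¹)
      (fun y => by rw [hμ y]; ring) hpp (by rw [hpm]; ring)
  · exact fderiv_mass_apply_of_einstein hd hf1 hr1 hr' (hrpos x hx).ne' (c := (L ^ 2)⁻¹)
      (fun y => by rw [hμ y]; ring) hmm (by rw [hpm, hmixed]; ring)

theorem mass_derivative_identities
    (d : ℕ) (hd : 2 ≤ d) (L k : ℝ) (hL : 0 < L)
    (U : Set (ℝ × ℝ)) (hU : IsOpen U)
    (f r : ℝ × ℝ → ℝ)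
    (hf : ContDiffOn ℝ 2 f U) (hr : ContDiffOn ℝ 2 r U)
    (hrpos : ∀ x ∈ U, 0 < r x)
    (Tpp Tmm Tpm : ℝ × ℝ → ℝ)
    (hTpp : ContinuousOn Tpp U) (hTmm : ContinuousOn Tmm U) (hTpm : ContinuousOn Tpm U)
    (hEpp : ∀ x ∈ U, r x * Tpp x / ((d : ℝ) - 1) =
      -(dplus f x) * dplus r x - dplus (dplus r) x)
    (hEmm : ∀ x ∈ U, r x * Tmm x / ((d : ℝ) - 1) =
      -(dminus f x) * dminus r x - dminus (dminus r) x)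
    (hEpm : ∀ x ∈ U, r x * Tpm x / ((d : ℝ) - 1) =
      dplus (dminus r) x + (((d : ℝ) - 2) / r x) *
        (Real.exp (-(f x)) / 2 * (k + r x ^ 2 / L ^ 2) + dplus r x * dminus r x)
      + (r x / L ^ 2) * Real.exp (-(f x)))
    (μ : ℝ × ℝ → ℝ)
    (hμ : ∀ x, μ x = k * r x ^ (d - 2)
      + 2 * Real.exp (f x) * r x ^ (d - 2) * dplus r x * dminus r x
      + r x ^ d / L ^ 2) :
    ∀ x ∈ U,
      dplus μ x = (2 * Real.exp (f x) * r x ^ d / ((d : ℝ) - 1) ^ 2) *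
        (Tpm x * (((d : ℝ) - 1) * dplus r x / r x)
          - (((d : ℝ) - 1) * dminus r x / r x) * Tpp x) ∧
      dminus μ x = (2 * Real.exp (f x) * r x ^ d / ((d : ℝ) - 1) ^ 2) *
        (Tpm x * (((d : ℝ) - 1) * dminus r x / r x)
          - (((d : ℝ) - 1) * dplus r x / r x) * Tmm x) :=
  mass_derivative_identities_general d hd L k U hU f r hf hr hrpos Tpp Tmm Tpm hEpp hEmm hEpm μ hμ
end

section
/- Let d ≥ 2 be an integer, L > 0, k a real constant, U ⊆ ℝ² open, and f, r : U → ℝ twice continuously differentiable with r > 0 on U. Suppose T₊₊, T₋₋, T₊₋ : U → ℝ satisfy the reduced Einstein equations: r·T±±/(d−1) = −(∂±f)(∂±r) − ∂±∂±r and r·T₊₋/(d−1) = ∂₊∂₋r + ((d−2)/r)[ (e^{−f}/2)(k + r²/L²) + (∂₊r)(∂₋r) ] + (r/L²)e^{−f}, and that T₊₊ ≥ 0, T₋₋ ≥ 0, T₊₋ ≥ 0 on U. Define μ = k r^{d−2} + 2 e^{f} r^{d−2} (∂₊r)(∂₋r) + r^{d}/L². Then at every point of U where the untrapped condition ∂₊r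 ≥ 0 and ∂₋r ≤ 0 holds, one has ∂₊μ ≥ 0 and ∂₋μ ≤ 0. -/
/-!
Write `μ = r^(d-2) M` with `M = k + 2 e^f (∂₊r)(∂₋r) + r²/L²`. Differentiating and eliminating
the second derivatives `∂±∂±r` and `∂₊∂₋r` with the reduced Einstein equations (and the symmetry
of mixed partials), everything except the stress-energy terms cancels:
`∂±μ = 2 e^f r^(d-1)/(d-1) · ((∂±r) T₊₋ - (∂∓r) T±±)`.
On an untrapped point both terms in the bracket have the sign of `±1` by the energy conditions.
-/

section
variable {E : Type*} [NormedAddCommGroup E] [NormedSpace ℝ E] {g h : E → ℝ} {x : E}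

theorem ContDiffAt.differentiableAt_fderiv_apply (hg : ContDiffAt ℝ 2 g x) (w : E) :
    DifferentiableAt ℝ (fun y => fderiv ℝ g y w) x :=
  ((hg.fderiv_right (m := 1) (by norm_num)).differentiableAt one_ne_zero).clm_apply
    (differentiableAt_const w)

theorem mul_fderiv_pow_mul_apply (hg : DifferentiableAt ℝ g x) (hh : DifferentiableAt ℝ h x)
    (n : ℕ) (v : E) :
    g x * fderiv ℝ (fun y => g y ^ n * h y) x v
      = g x ^ n * (n * fderiv ℝ g x v * h x + g x * fderiv ℝ h x v) := by
  have H : HasFDerivAt (fun y => g y ^ n * h y) _ x := (hg.hasFDerivAt.pow n).mul hh.hasFDerivAt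
  rw [H.fderiv]
  simp only [nsmul_eq_mul, add_apply, smul_apply, smul_eq_mul]
  rcases n with _ | n
  · simp
  · rw [Nat.add_sub_cancel]
    ring

end

theorem dminus_dplus_eq_dplus_dminus {r : ℝ × ℝ → ℝ} {x : ℝ × ℝ} (hr : ContDiffAt ℝ 2 r x) :
    dminus (dplus r) x = dplus (dminus r) x := by
  have hD := (hr.fderiv_right (m := 1) (by norm_num)).differentiableAt one_ne_zero
  change fderiv ℝ (fun y => fderiv ℝ r y (1, 0)) x (0, 1)
    = fderiv ℝ (fun y => fderiv ℝ r y (0, 1)) x (1, 0)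
  rw [fderiv_clm_apply hD (differentiableAt_const _), fderiv_clm_apply hD (differentiableAt_const _)]
  simpa using hr.isSymmSndFDerivAt (by norm_num) (0, 1) (1, 0)

/-- The Misner–Sharp mass is `r ^ (d - 2)` times this. -/
noncomputable def massAspect (k L : ℝ) (f r : ℝ × ℝ → ℝ) (y : ℝ × ℝ) : ℝ :=
  k + 2 * Real.exp (f y) * dplus r y * dminus r y + r y ^ 2 / L ^ 2

section
variable {k L : ℝ} {f r : ℝ × ℝ → ℝ} {x : ℝ × ℝ}

theorem differentiableAt_massAspect (hf : DifferentiableAt ℝ f x) (hr : ContDiffAt ℝ 2 r x) :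
    DifferentiableAt ℝ (massAspect k L f r) x := by
  have hA : DifferentiableAt ℝ (dplus r) x := hr.differentiableAt_fderiv_apply _
  have hB : DifferentiableAt ℝ (dminus r) x := hr.differentiableAt_fderiv_apply _
  have := hr.differentiableAt two_ne_zero
  unfold massAspect
  fun_prop

theorem fderiv_massAspect_apply (hf : DifferentiableAt ℝ f x) (hr : ContDiffAt ℝ 2 r x)
    (v : ℝ × ℝ) :
    fderiv ℝ (massAspect k L f r) x v
      = 2 * Real.exp (f x) * (fderiv ℝ f x v * dplus r x * dminus r x
          + fderiv ℝ (dplus r) x v * dminus r x + dplus r x * fderiv ℝ (dminus r) x v)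
        + 2 * r x * fderiv ℝ r x v / L ^ 2 := by
  have hA : DifferentiableAt ℝ (dplus r) x := hr.differentiableAt_fderiv_apply _
  have hB : DifferentiableAt ℝ (dminus r) x := hr.differentiableAt_fderiv_apply _
  have H : HasFDerivAt (fun y => k + 2 * Real.exp (f y) * dplus r y * dminus r y
      + r y ^ 2 * (L ^ 2)⁻¹) _ x :=
    (((hf.hasFDerivAt.exp.const_mul 2).mul hA.hasFDerivAt).mul hB.hasFDerivAt).const_add k
    |>.add (((hr.differentiableAt two_ne_zero).hasFDerivAt.pow 2).mul_const (L ^ 2)⁻¹)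
  unfold massAspect
  simp_rw [div_eq_mul_inv]
  rw [H.fderiv]
  simp only [Pi.mul_apply, smul_add, Nat.add_one_sub_one, pow_one, nsmul_eq_mul, Nat.cast_ofNat,
    add_apply, smul_apply, smul_eq_mul]
  ring

end

/-- Here `a = ∂r`, `b` is the other null derivative of `r`, `φ = ∂f`, and `p`, `q` are the
derivatives of `a`, `b`; the hypotheses are the `∂∂r` and `∂₊∂₋r` Einstein equations. -/
theorem massAspect_deriv_identity {D ρ F k L a b φ p q S T : ℝ} (hD : D - 1 ≠ 0) (hρ : ρ ≠ 0)
    (hp : ρ * T / (D - 1) = -φ * a - p)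
    (hq : ρ * S / (D - 1) = q + (D - 2) / ρ *
        (Real.exp (-F) / 2 * (k + ρ ^ 2 / L ^ 2) + a * b) + ρ / L ^ 2 * Real.exp (-F)) :
    (D - 2) * a * (k + 2 * Real.exp F * a * b + ρ ^ 2 / L ^ 2)
      + ρ * (2 * Real.exp F * (φ * a * b + p * b + a * q) + 2 * ρ * a / L ^ 2)
      = 2 * Real.exp F * ρ ^ 2 / (D - 1) * (a * S - b * T) := by
  rw [Real.exp_neg] at hq
  linear_combination (norm := skip) (2 * Real.exp F * ρ * b) * hp - (2 * Real.exp F * ρ * a) * hq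
  field_simp
  ring

section
variable {d : ℕ} {k L Tpp Tmm Tpm : ℝ} {f r : ℝ × ℝ → ℝ} {x : ℝ × ℝ}

theorem dplus_pow_mul_massAspect (hd : 2 ≤ d) (hf : ContDiffAt ℝ 2 f x)
    (hr : ContDiffAt ℝ 2 r x) (hρ : r x ≠ 0)
    (hEpp : r x * Tpp / ((d : ℝ) - 1) = -(dplus f x) * dplus r x - dplus (dplus r) x)
    (hEpm : r x * Tpm / ((d : ℝ) - 1) = dplus (dminus r) x + (((d : ℝ) - 2) / r x) *
        (Real.exp (-(f x)) / 2 * (k + r x ^ 2 / L ^ 2) + dplus r x * dminus r x)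
      + (r x / L ^ 2) * Real.exp (-(f x))) :
    dplus (fun y => r y ^ (d - 2) * massAspect k L f r y) x
      = 2 * Real.exp (f x) * r x ^ (d - 1) / ((d : ℝ) - 1)
        * (dplus r x * Tpm - dminus r x * Tpp) := by
  obtain ⟨n, rfl⟩ : ∃ n, d = n + 2 := ⟨d - 2, by omega⟩
  have hd1 : ((n + 2 : ℕ) : ℝ) - 1 ≠ 0 := by push_cast; linarith [n.cast_nonneg (α := ℝ)]
  have key := mul_fderiv_pow_mul_apply (hr.differentiableAt two_ne_zero)
    (differentiableAt_massAspect (k := k) (L := L) (hf.differentiableAt two_ne_zero) hr) n (1, 0)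
  rw [fderiv_massAspect_apply (hf.differentiableAt two_ne_zero) hr] at key
  have alg := massAspect_deriv_identity hd1 hρ hEpp hEpm
  apply mul_left_cancel₀ hρ
  rw [Nat.add_sub_cancel, dplus, key]
  simp only [← dplus.eq_1, massAspect]
  push_cast at alg ⊢
  linear_combination (r x ^ n) * alg

theorem dminus_pow_mul_massAspect (hd : 2 ≤ d) (hf : ContDiffAt ℝ 2 f x)
    (hr : ContDiffAt ℝ 2 r x) (hρ : r x ≠ 0)
    (hEmm : r x * Tmm / ((d : ℝ) - 1) = -(dminus f x) * dminus r x - dminus (dminus r) x)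
    (hEpm : r x * Tpm / ((d : ℝ) - 1) = dplus (dminus r) x + (((d : ℝ) - 2) / r x) *
        (Real.exp (-(f x)) / 2 * (k + r x ^ 2 / L ^ 2) + dplus r x * dminus r x)
      + (r x / L ^ 2) * Real.exp (-(f x))) :
    dminus (fun y => r y ^ (d - 2) * massAspect k L f r y) x
      = 2 * Real.exp (f x) * r x ^ (d - 1) / ((d : ℝ) - 1)
        * (dminus r x * Tpm - dplus r x * Tmm) := by
  obtain ⟨n, rfl⟩ : ∃ n, d = n + 2 := ⟨d - 2, by omega⟩
  have hd1 : ((n + 2 : ℕ) : ℝ) - 1 ≠ 0 := by push_cast; linarith [n.cast_nonneg (α := ℝ)]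
  have key := mul_fderiv_pow_mul_apply (hr.differentiableAt two_ne_zero)
    (differentiableAt_massAspect (k := k) (L := L) (hf.differentiableAt two_ne_zero) hr) n (0, 1)
  rw [fderiv_massAspect_apply (hf.differentiableAt two_ne_zero) hr] at key
  rw [mul_comm (dplus r x) (dminus r x)] at hEpm
  have alg := massAspect_deriv_identity hd1 hρ hEmm hEpm
  apply mul_left_cancel₀ hρ
  rw [Nat.add_sub_cancel, dminus, key]
  simp only [← dminus.eq_1, massAspect, dminus_dplus_eq_dplus_dminus hr]
  push_cast at alg ⊢
  linear_combination (r x ^ n) * alg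

end

theorem mass_monotone_untrapped_pointwise_general
    (d : ℕ) (hd : 2 ≤ d) (L k : ℝ)
    (U : Set (ℝ × ℝ)) (hU : IsOpen U)
    (f r : ℝ × ℝ → ℝ)
    (hf : ContDiffOn ℝ 2 f U) (hr : ContDiffOn ℝ 2 r U)
    (hrpos : ∀ x ∈ U, 0 < r x)
    (Tpp Tmm Tpm : ℝ × ℝ → ℝ)
    (hEpp : ∀ x ∈ U, r x * Tpp x / ((d : ℝ) - 1) =
      -(dplus f x) * dplus r x - dplus (dplus r) x)
    (hEmm : ∀ x ∈ U, r x * Tmm x / ((d : ℝ) - 1) =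
      -(dminus f x) * dminus r x - dminus (dminus r) x)
    (hEpm : ∀ x ∈ U, r x * Tpm x / ((d : ℝ) - 1) =
      dplus (dminus r) x + (((d : ℝ) - 2) / r x) *
        (Real.exp (-(f x)) / 2 * (k + r x ^ 2 / L ^ 2) + dplus r x * dminus r x)
      + (r x / L ^ 2) * Real.exp (-(f x)))
    (hTppnn : ∀ x ∈ U, 0 ≤ Tpp x) (hTmmnn : ∀ x ∈ U, 0 ≤ Tmm x)
    (hTpmnn : ∀ x ∈ U, 0 ≤ Tpm x)
    (μ : ℝ × ℝ → ℝ)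
    (hμ : ∀ x, μ x = k * r x ^ (d - 2)
      + 2 * Real.exp (f x) * r x ^ (d - 2) * dplus r x * dminus r x
      + r x ^ d / L ^ 2) :
    ∀ x ∈ U, 0 ≤ dplus r x → dminus r x ≤ 0 →
      0 ≤ dplus μ x ∧ dminus μ x ≤ 0 := by
  intro x hx ha hb
  have hfx : ContDiffAt ℝ 2 f x := hf.contDiffAt (hU.mem_nhds hx)
  have hrx : ContDiffAt ℝ 2 r x := hr.contDiffAt (hU.mem_nhds hx)
  have hρ := hrpos x hx
  have hμ_eq : μ = fun y => r y ^ (d - 2) * massAspect k L f r y := funext fun y => by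
    rw [hμ, massAspect, ← pow_sub_mul_pow (r y) hd]
    ring
  have hd1 : 0 < (d : ℝ) - 1 := by
    have : (2 : ℝ) ≤ d := by exact_mod_cast hd
    linarith
  have hc : 0 ≤ 2 * Real.exp (f x) * r x ^ (d - 1) / ((d : ℝ) - 1) := by positivity
  rw [hμ_eq, dplus_pow_mul_massAspect hd hfx hrx hρ.ne' (hEpp x hx) (hEpm x hx),
    dminus_pow_mul_massAspect hd hfx hrx hρ.ne' (hEmm x hx) (hEpm x hx)]
  exact ⟨mul_nonneg hc (by nlinarith [mul_nonneg ha (hTpmnn x hx), hTppnn x hx]),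
    mul_nonpos_of_nonneg_of_nonpos hc (by nlinarith [mul_nonneg ha (hTmmnn x hx), hTpmnn x hx])⟩

theorem mass_monotone_untrapped_pointwise
    (d : ℕ) (hd : 2 ≤ d) (L k : ℝ) (hL : 0 < L)
    (U : Set (ℝ × ℝ)) (hU : IsOpen U)
    (f r : ℝ × ℝ → ℝ)
    (hf : ContDiffOn ℝ 2 f U) (hr : ContDiffOn ℝ 2 r U)
    (hrpos : ∀ x ∈ U, 0 < r x)
    (Tpp Tmm Tpm : ℝ × ℝ → ℝ)
    (hEpp : ∀ x ∈ U, r x * Tpp x / ((d : ℝ) - 1) =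
      -(dplus f x) * dplus r x - dplus (dplus r) x)
    (hEmm : ∀ x ∈ U, r x * Tmm x / ((d : ℝ) - 1) =
      -(dminus f x) * dminus r x - dminus (dminus r) x)
    (hEpm : ∀ x ∈ U, r x * Tpm x / ((d : ℝ) - 1) =
      dplus (dminus r) x + (((d : ℝ) - 2) / r x) *
        (Real.exp (-(f x)) / 2 * (k + r x ^ 2 / L ^ 2) + dplus r x * dminus r x)
      + (r x / L ^ 2) * Real.exp (-(f x)))
    (hTppnn : ∀ x ∈ U, 0 ≤ Tpp x) (hTmmnn : ∀ x ∈ U, 0 ≤ Tmm x)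
    (hTpmnn : ∀ x ∈ U, 0 ≤ Tpm x)
    (μ : ℝ × ℝ → ℝ)
    (hμ : ∀ x, μ x = k * r x ^ (d - 2)
      + 2 * Real.exp (f x) * r x ^ (d - 2) * dplus r x * dminus r x
      + r x ^ d / L ^ 2) :
    ∀ x ∈ U, 0 ≤ dplus r x → dminus r x ≤ 0 →
      0 ≤ dplus μ x ∧ dminus μ x ≤ 0 :=
  mass_monotone_untrapped_pointwise_general d hd L k U hU f r hf hr hrpos Tpp Tmm Tpm hEpp hEmm hEpm
    hTppnn hTmmnn hTpmnn μ hμ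
end

section
/- Let d ≥ 2 be an integer, L > 0, k a real constant, U ⊆ ℝ² open, and f, r : U → ℝ twice continuously differentiable with r > 0 on U. Suppose T₊₊, T₋₋, T₊₋ : U → ℝ satisfy the reduced Einstein equations: r·T±±/(d−1) = −(∂±f)(∂±r) − ∂±∂±r and r·T₊₋/(d−1) = ∂₊∂₋r + ((d−2)/r)[ (e^{−f}/2)(k + r²/L²) + (∂₊r)(∂₋r) ] + (r/L²)e^{−f}, with T₊₊ ≥ 0, T₋₋ ≥ 0, T₊₋ ≥ 0 on U. Define μ = k r^{d−2} + 2 e^{f} r^{d−2} (∂₊r)(∂₋r) + r^{d}/L². Let γ = (γ⁺, γ⁻) : [0,1] → U be continuously differentiable with (γ⁺)′(t) ≥ 0 and (γ⁻)′(t) ≤ 0 for all t, and suppose ∂₊r ≥ 0 and ∂₋r ≤ 0 at every point γ(t). Then the function t ↦ μ(γ(t)) is monotonically non-decreasing on [0,1]. -/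
/-!
Differentiating `μ` and eliminating the second derivatives of `r` with the Einstein equations
(the mixed ones agree since `r` is `C²`) gives the flux identities
`∂₊μ = 2 e^f r^{d-1} (∂₊r T₊₋ - ∂₋r T₊₊) / (d - 1)` and
`∂₋μ = 2 e^f r^{d-1} (∂₋r T₊₋ - ∂₊r T₋₋) / (d - 1)`.
At an untrapped point the dominant energy condition makes `∂₊μ ≥ 0` and `∂₋μ ≤ 0`, so along an
outward path `(μ ∘ γ)' = (γ⁺)' ∂₊μ + (γ⁻)' ∂₋μ ≥ 0`.
-/

open Set Real

theorem DifferentiableAt.hasDerivAt_comp_prodMk {g : ℝ × ℝ → ℝ} {γp γm : ℝ → ℝ} {a b t : ℝ}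
    (hg : DifferentiableAt ℝ g (γp t, γm t)) (hγp : HasDerivAt γp a t)
    (hγm : HasDerivAt γm b t) :
    HasDerivAt (fun s => g (γp s, γm s))
      (a * dplus g (γp t, γm t) + b * dminus g (γp t, γm t)) t := by
  have hab : ((a, b) : ℝ × ℝ) = a • (1, 0) + b • (0, 1) := by ext <;> simp
  have h := hg.hasFDerivAt.comp_hasDerivAt t (hγp.prodMk hγm)
  rwa [hab, map_add, map_smul, map_smul, smul_eq_mul, smul_eq_mul] at h

theorem monotoneOn_comp_of_dplus_nonneg_of_dminus_nonpos {g : ℝ × ℝ → ℝ} {γp γm : ℝ → ℝ}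
    {D : Set ℝ} (hD : Convex ℝ D) (hγ : DifferentiableOn ℝ (fun t => (γp t, γm t)) D)
    (hγp' : ∀ t ∈ D, 0 ≤ derivWithin γp D t) (hγm' : ∀ t ∈ D, derivWithin γm D t ≤ 0)
    (hg : ∀ t ∈ D, DifferentiableAt ℝ g (γp t, γm t))
    (hgp : ∀ t ∈ D, 0 ≤ dplus g (γp t, γm t)) (hgm : ∀ t ∈ D, dminus g (γp t, γm t) ≤ 0) :
    MonotoneOn (fun t => g (γp t, γm t)) D := by
  have hcont : ContinuousOn (fun t => g (γp t, γm t)) D := fun t ht =>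
    (hg t ht).continuousAt.comp_continuousWithinAt (f := fun t => (γp t, γm t))
      (hγ.continuousOn t ht)
  refine monotoneOn_of_hasDerivWithinAt_nonneg hD hcont
    (f' := fun t => derivWithin γp D t * dplus g (γp t, γm t)
      + derivWithin γm D t * dminus g (γp t, γm t)) (fun t ht => ?_) (fun t ht => ?_)
  · have hDt : D ∈ nhds t := mem_interior_iff_mem_nhds.1 ht
    have hγt := hγ.differentiableAt hDt
    have hp : HasDerivAt γp (derivWithin γp D t) t := by
      rw [derivWithin_of_mem_nhds hDt]; exact hγt.fst.hasDerivAt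
    have hm : HasDerivAt γm (derivWithin γm D t) t := by
      rw [derivWithin_of_mem_nhds hDt]; exact hγt.snd.hasDerivAt
    exact ((hg t (interior_subset ht)).hasDerivAt_comp_prodMk hp hm).hasDerivWithinAt
  · have ht' := interior_subset ht
    exact add_nonneg (mul_nonneg (hγp' t ht') (hgp t ht'))
      (mul_nonneg_of_nonpos_of_nonpos (hγm' t ht') (hgm t ht'))

section SecondDerivatives

variable {g : ℝ × ℝ → ℝ} {x : ℝ × ℝ}

theorem ContDiffAt.differentiableAt_dplus (hg : ContDiffAt ℝ 2 g x) :
    DifferentiableAt ℝ (dplus g) x :=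
  ((hg.fderiv_right le_rfl).differentiableAt one_ne_zero).clm_apply (differentiableAt_const _)

theorem ContDiffAt.differentiableAt_dminus (hg : ContDiffAt ℝ 2 g x) :
    DifferentiableAt ℝ (dminus g) x :=
  ((hg.fderiv_right le_rfl).differentiableAt one_ne_zero).clm_apply (differentiableAt_const _)

theorem ContDiffAt.dminus_dplus (hg : ContDiffAt ℝ 2 g x) :
    dminus (dplus g) x = dplus (dminus g) x := by
  have hd := (hg.fderiv_right le_rfl).differentiableAt one_ne_zero
  change fderiv ℝ (fun y => fderiv ℝ g y (1, 0)) x (0, 1)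
    = fderiv ℝ (fun y => fderiv ℝ g y (0, 1)) x (1, 0)
  rw [fderiv_clm_apply hd (differentiableAt_const _),
    fderiv_clm_apply hd (differentiableAt_const _)]
  simpa using hg.isSymmSndFDerivAt (by simp) (0, 1) (1, 0)

end SecondDerivatives

noncomputable def misnerSharpMass (d : ℕ) (k L : ℝ) (f r : ℝ × ℝ → ℝ) (x : ℝ × ℝ) : ℝ :=
  k * r x ^ (d - 2) + 2 * exp (f x) * r x ^ (d - 2) * dplus r x * dminus r x + r x ^ d / L ^ 2

/-- Read with `ρ = r`, `φ = f`, `p = ∂₊r`, `m = ∂₋r` and primes denoting `∂₊` (or with the roles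
of `+` and `-` exchanged), the left side is the product-rule expression for `∂₊μ`. -/
theorem einstein_mass_flux {d : ℕ} (hd : 2 ≤ d) {k L ρ φ p m φ' p' m' T Tpm : ℝ} (hρ : ρ ≠ 0)
    (hL : L ≠ 0) (hT : ρ * T / ((d : ℝ) - 1) = -φ' * p - p')
    (hTpm : ρ * Tpm / ((d : ℝ) - 1) =
      m' + ((d : ℝ) - 2) / ρ * (exp (-φ) / 2 * (k + ρ ^ 2 / L ^ 2) + p * m)
        + ρ / L ^ 2 * exp (-φ)) :
    (d - 2 : ℕ) * ρ ^ (d - 3) * (k + 2 * exp φ * p * m) * p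
      + 2 * exp φ * ρ ^ (d - 2) * (φ' * p * m + p' * m + p * m')
      + d * ρ ^ (d - 1) * p / L ^ 2
      = 2 * exp φ * ρ ^ (d - 1) / ((d : ℝ) - 1) * (p * Tpm - m * T) := by
  have hd1 : (d : ℝ) - 1 ≠ 0 := by
    have : (2 : ℝ) ≤ d := by exact_mod_cast hd
    linarith
  obtain rfl : p' = -φ' * p - ρ * T / ((d : ℝ) - 1) := by linarith
  obtain rfl : m' = ρ * Tpm / ((d : ℝ) - 1)
      - ((d : ℝ) - 2) / ρ * (exp (-φ) / 2 * (k + ρ ^ 2 / L ^ 2) + p * m)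
      - ρ / L ^ 2 * exp (-φ) := by linarith
  rw [exp_neg]
  obtain rfl | hd3 := hd.eq_or_lt
  · norm_num
    field_simp
    ring
  · obtain ⟨n, rfl⟩ := Nat.exists_eq_add_of_le' hd3
    simp only [show n + 3 - 3 = n by omega, show n + 3 - 2 = n + 1 by omega,
      show n + 3 - 1 = n + 2 by omega]
    push_cast
    field_simp
    ring

section MisnerSharpMass

variable {d : ℕ} {k L : ℝ} {f r : ℝ × ℝ → ℝ} {x : ℝ × ℝ}

theorem differentiableAt_misnerSharpMass (hf : DifferentiableAt ℝ f x)
    (hr : DifferentiableAt ℝ r x) (hp : DifferentiableAt ℝ (dplus r) x)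
    (hm : DifferentiableAt ℝ (dminus r) x) :
    DifferentiableAt ℝ (misnerSharpMass d k L f r) x := by
  unfold misnerSharpMass
  fun_prop

theorem fderiv_misnerSharpMass_apply (hf : DifferentiableAt ℝ f x)
    (hr : DifferentiableAt ℝ r x) (hp : DifferentiableAt ℝ (dplus r) x)
    (hm : DifferentiableAt ℝ (dminus r) x) (v : ℝ × ℝ) :
    fderiv ℝ (misnerSharpMass d k L f r) x v =
      (d - 2 : ℕ) * r x ^ (d - 3) * (k + 2 * exp (f x) * dplus r x * dminus r x)
          * fderiv ℝ r x v
        + 2 * exp (f x) * r x ^ (d - 2) * (fderiv ℝ f x v * dplus r x * dminus r x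
          + fderiv ℝ (dplus r) x v * dminus r x + dplus r x * fderiv ℝ (dminus r) x v)
        + d * r x ^ (d - 1) * fderiv ℝ r x v / L ^ 2 := by
  have hR := hr.hasFDerivAt
  have h : HasFDerivAt (misnerSharpMass d k L f r) _ x :=
    (((hR.pow (d - 2)).const_mul k).add
      ((((hf.hasFDerivAt.exp.const_mul 2).mul (hR.pow (d - 2))).mul hp.hasFDerivAt).mul
        hm.hasFDerivAt)).add ((hR.pow d).mul_const (L ^ 2)⁻¹)
  rw [h.fderiv]
  simp [Nat.sub_sub]
  ring

theorem dplus_misnerSharpMass (hd : 2 ≤ d) (hL : L ≠ 0) (hf : DifferentiableAt ℝ f x)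
    (hr : ContDiffAt ℝ 2 r x) (hrx : r x ≠ 0) {Tpp Tpm : ℝ}
    (hEpp : r x * Tpp / ((d : ℝ) - 1) = -(dplus f x) * dplus r x - dplus (dplus r) x)
    (hEpm : r x * Tpm / ((d : ℝ) - 1) =
      dplus (dminus r) x + (((d : ℝ) - 2) / r x) *
        (exp (-(f x)) / 2 * (k + r x ^ 2 / L ^ 2) + dplus r x * dminus r x)
      + (r x / L ^ 2) * exp (-(f x))) :
    dplus (misnerSharpMass d k L f r) x
      = 2 * exp (f x) * r x ^ (d - 1) / ((d : ℝ) - 1) * (dplus r x * Tpm - dminus r x * Tpp) := by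
  rw [dplus, fderiv_misnerSharpMass_apply hf (hr.differentiableAt two_ne_zero)
    hr.differentiableAt_dplus hr.differentiableAt_dminus]
  exact einstein_mass_flux hd hrx hL hEpp hEpm

theorem dminus_misnerSharpMass (hd : 2 ≤ d) (hL : L ≠ 0) (hf : DifferentiableAt ℝ f x)
    (hr : ContDiffAt ℝ 2 r x) (hrx : r x ≠ 0) {Tmm Tpm : ℝ}
    (hEmm : r x * Tmm / ((d : ℝ) - 1) = -(dminus f x) * dminus r x - dminus (dminus r) x)
    (hEpm : r x * Tpm / ((d : ℝ) - 1) =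
      dplus (dminus r) x + (((d : ℝ) - 2) / r x) *
        (exp (-(f x)) / 2 * (k + r x ^ 2 / L ^ 2) + dplus r x * dminus r x)
      + (r x / L ^ 2) * exp (-(f x))) :
    dminus (misnerSharpMass d k L f r) x
      = 2 * exp (f x) * r x ^ (d - 1) / ((d : ℝ) - 1) * (dminus r x * Tpm - dplus r x * Tmm) := by
  rw [mul_comm (dplus r x)] at hEpm
  have h := einstein_mass_flux hd hrx hL hEmm hEpm
  rw [dminus, fderiv_misnerSharpMass_apply hf (hr.differentiableAt two_ne_zero)
    hr.differentiableAt_dplus hr.differentiableAt_dminus]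
  simp only [show ∀ g : ℝ × ℝ → ℝ, fderiv ℝ g x (0, 1) = dminus g x from fun _ => rfl,
    hr.dminus_dplus]
  linear_combination h

end MisnerSharpMass

theorem mass_monotone_along_outward_path
    (d : ℕ) (hd : 2 ≤ d) (L k : ℝ) (hL : 0 < L)
    (U : Set (ℝ × ℝ)) (hU : IsOpen U)
    (f r : ℝ × ℝ → ℝ)
    (hf : ContDiffOn ℝ 2 f U) (hr : ContDiffOn ℝ 2 r U)
    (hrpos : ∀ x ∈ U, 0 < r x)
    (Tpp Tmm Tpm : ℝ × ℝ → ℝ)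
    (hEpp : ∀ x ∈ U, r x * Tpp x / ((d : ℝ) - 1) =
      -(dplus f x) * dplus r x - dplus (dplus r) x)
    (hEmm : ∀ x ∈ U, r x * Tmm x / ((d : ℝ) - 1) =
      -(dminus f x) * dminus r x - dminus (dminus r) x)
    (hEpm : ∀ x ∈ U, r x * Tpm x / ((d : ℝ) - 1) =
      dplus (dminus r) x + (((d : ℝ) - 2) / r x) *
        (Real.exp (-(f x)) / 2 * (k + r x ^ 2 / L ^ 2) + dplus r x * dminus r x)
      + (r x / L ^ 2) * Real.exp (-(f x)))
    (hTppnn : ∀ x ∈ U, 0 ≤ Tpp x) (hTmmnn : ∀ x ∈ U, 0 ≤ Tmm x)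
    (hTpmnn : ∀ x ∈ U, 0 ≤ Tpm x)
    (μ : ℝ × ℝ → ℝ)
    (hμ : ∀ x, μ x = k * r x ^ (d - 2)
      + 2 * Real.exp (f x) * r x ^ (d - 2) * dplus r x * dminus r x
      + r x ^ d / L ^ 2)
    (γp γm : ℝ → ℝ)
    (hγmem : ∀ t ∈ Set.Icc (0 : ℝ) 1, (γp t, γm t) ∈ U)
    (hγC1 : ContDiffOn ℝ 1 (fun t => (γp t, γm t)) (Set.Icc (0 : ℝ) 1))
    (hγp' : ∀ t ∈ Set.Icc (0 : ℝ) 1, 0 ≤ derivWithin γp (Set.Icc (0 : ℝ) 1) t)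
    (hγm' : ∀ t ∈ Set.Icc (0 : ℝ) 1, derivWithin γm (Set.Icc (0 : ℝ) 1) t ≤ 0)
    (huntrapped : ∀ t ∈ Set.Icc (0 : ℝ) 1,
      0 ≤ dplus r (γp t, γm t) ∧ dminus r (γp t, γm t) ≤ 0) :
    MonotoneOn (fun t => μ (γp t, γm t)) (Set.Icc (0 : ℝ) 1) := by
  obtain rfl : μ = misnerSharpMass d k L f r := funext hμ
  have hd1 : (0 : ℝ) < d - 1 := by
    have : (2 : ℝ) ≤ d := by exact_mod_cast hd
    linarith
  have key : ∀ t ∈ Icc (0 : ℝ) 1,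
      DifferentiableAt ℝ (misnerSharpMass d k L f r) (γp t, γm t)
        ∧ 0 ≤ dplus (misnerSharpMass d k L f r) (γp t, γm t)
        ∧ dminus (misnerSharpMass d k L f r) (γp t, γm t) ≤ 0 := by
    intro t ht
    obtain ⟨hp, hm⟩ := huntrapped t ht
    have hx := hγmem t ht
    have hrx := hr.contDiffAt (hU.mem_nhds hx)
    have hfx := (hf.contDiffAt (hU.mem_nhds hx)).differentiableAt two_ne_zero
    have hC : 0 ≤ 2 * exp (f (γp t, γm t)) * r (γp t, γm t) ^ (d - 1) / ((d : ℝ) - 1) :=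
      div_nonneg (by have := hrpos _ hx; positivity) hd1.le
    refine ⟨differentiableAt_misnerSharpMass hfx (hrx.differentiableAt two_ne_zero)
      hrx.differentiableAt_dplus hrx.differentiableAt_dminus, ?_, ?_⟩
    · rw [dplus_misnerSharpMass hd hL.ne' hfx hrx (hrpos _ hx).ne' (hEpp _ hx) (hEpm _ hx)]
      exact mul_nonneg hC (sub_nonneg.2 ((mul_nonpos_of_nonpos_of_nonneg hm (hTppnn _ hx)).trans
        (mul_nonneg hp (hTpmnn _ hx))))
    · rw [dminus_misnerSharpMass hd hL.ne' hfx hrx (hrpos _ hx).ne' (hEmm _ hx) (hEpm _ hx)]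
      exact mul_nonpos_of_nonneg_of_nonpos hC (sub_nonpos.2 ((mul_nonpos_of_nonpos_of_nonneg hm
        (hTpmnn _ hx)).trans (mul_nonneg hp (hTmmnn _ hx))))
  exact monotoneOn_comp_of_dplus_nonneg_of_dminus_nonpos (convex_Icc 0 1)
    (hγC1.differentiableOn one_ne_zero) hγp' hγm' (fun t ht => (key t ht).1)
    (fun t ht => (key t ht).2.1) (fun t ht => (key t ht).2.2)
end

section
/- Let d ≥ 2 be an integer, L > 0, r₀ > 0, μ ∈ ℝ, N ≥ 2 an integer, and let g₂, …, g_N be real coupling constants defining the potential V(φ) = Σ_{n=2}^{N} g_n φⁿ. Set ω₀ = r₀^{d−2} + r₀^{d}/L² and λ = d(d−1) + μ². For each R₀ > r₀ consider the logarithmic profile φ(r) = μ·log(r/R₀) for r₀ ≤ r ≤ R₀ and φ(r) = 0 for r ≥ R₀, and define ω_{R₀}(∞) = (R₀/r₀)^{−μ²/(d−1)} [ ω₀ + (1/(d−1)) ∫_{r₀}^{R₀} (ρ/r₀)^{μ²/(d−1)} ρ^{d−1} ( (1 + ρ²/L²)·μ²/ρ² + 2V(μ log(ρ/R₀)) ) dρ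 ]. Then lim_{R₀ → ∞} λ · ω_{R₀}(∞) / R₀^{d} = μ²/L² + 2 Σ_{n=2}^{N} n!·g_n·[ (1−d)μ / (d(d−1)+μ²) ]ⁿ. -/
/-!
With `a = μ²/(d-1)` and `b = a + d` one has `λ = (d-1) b` and `(R/r₀)^(-a) / R^d = r₀^a / R^b`,
so `λ ω(R) / R^d` is `(d-1) b ω₀ r₀^a / R^b`, which tends to `0`, plus `b / R^b` times
`∫_{r₀}^R ρ^(b-1) (μ²/ρ² + μ²/L² + 2 V(μ log(ρ/R))) dρ`. The `μ²/ρ²` part is `O(R^(b-1))`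
because `b ≥ 2`. Expanding `V`, the rest is a combination of the log-moments
`R^(-b) ∫_{r₀}^R ρ^(b-1) log(ρ/R)^n dρ`, which tend to
`∫_0^1 t^(b-1) (log t)^n dt = (-1)^n n!/b^(n+1)`: integration by parts lowers `n` by one.
Hence the limit is `μ²/L² + 2 ∑ n! gₙ (-μ/b)^n`, and `-μ/b = (1-d) μ / λ`.
-/

open Filter Real Topology intervalIntegral
open scoped Nat

section LogMoments

variable {b r₀ R : ℝ}

lemma tendsto_log_sub_pow_div_rpow_atTop (c : ℝ) (hb : 0 < b) (n : ℕ) :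
    Tendsto (fun R => (log R - c) ^ n / R ^ b) atTop (𝓝 0) := by
  obtain rfl | hn := Nat.eq_zero_or_pos n
  · simpa using (tendsto_const_nhds (x := (1 : ℝ))).div_atTop (tendsto_rpow_atTop hb)
  have hbn : 0 < b / n := by positivity
  have h : Tendsto (fun R => (log R - c) / R ^ (b / n)) atTop (𝓝 0) := by
    simpa [sub_div] using (isLittleO_log_rpow_atTop hbn).tendsto_div_nhds_zero.sub
      ((tendsto_const_nhds (x := c)).div_atTop (tendsto_rpow_atTop hbn))
  have h' : Tendsto (fun R => ((log R - c) / R ^ (b / n)) ^ n) atTop (𝓝 0) := by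
    simpa [hn.ne'] using h.pow n
  refine h'.congr' ?_
  filter_upwards [eventually_gt_atTop 0] with R hR
  rw [div_pow, ← rpow_natCast (R ^ (b / n)), ← rpow_mul hR.le, div_mul_cancel₀ _ (by positivity)]

lemma intervalIntegrable_of_continuousAt_pos {f : ℝ → ℝ} (hf : ∀ x, 0 < x → ContinuousAt f x)
    (hr₀ : 0 < r₀) (hR : 0 < R) : IntervalIntegrable f MeasureTheory.volume r₀ R :=
  ContinuousOn.intervalIntegrable fun x hx =>
    (hf x ((lt_min hr₀ hR).trans_le hx.1)).continuousWithinAt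

lemma hasDerivAt_rpow_mul_log_sub_pow_succ_div (hb : b ≠ 0) (c : ℝ) (n : ℕ) {x : ℝ}
    (hx : 0 < x) :
    HasDerivAt (fun ρ => ρ ^ b * (log ρ - c) ^ (n + 1) / b)
      (x ^ (b - 1) * (log x - c) ^ (n + 1) + (n + 1) / b * (x ^ (b - 1) * (log x - c) ^ n))
      x := by
  have hlog : HasDerivAt (fun ρ => log ρ - c) x⁻¹ x := (hasDerivAt_log hx.ne').sub_const c
  refine (((hasDerivAt_rpow_const (Or.inl hx.ne')).mul (hlog.fun_pow (n + 1))).div_const b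
    ).congr_deriv ?_
  rw [rpow_sub_one hx.ne']
  push_cast
  field_simp

lemma integral_rpow_mul_log_sub_pow_succ (hb : b ≠ 0) (hr₀ : 0 < r₀) (hR : 0 < R) (n : ℕ) :
    ∫ ρ in r₀..R, ρ ^ (b - 1) * (log ρ - log R) ^ (n + 1) =
      -(r₀ ^ b * (log r₀ - log R) ^ (n + 1)) / b -
        (n + 1) / b * ∫ ρ in r₀..R, ρ ^ (b - 1) * (log ρ - log R) ^ n := by
  have hint : ∀ m : ℕ, IntervalIntegrable (fun ρ => ρ ^ (b - 1) * (log ρ - log R) ^ m)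
      MeasureTheory.volume r₀ R := fun m =>
    intervalIntegrable_of_continuousAt_pos (fun x hx => by fun_prop (disch := simp [hx.ne']))
      hr₀ hR
  have hFTC := integral_eq_sub_of_hasDerivAt
    (fun x hx => hasDerivAt_rpow_mul_log_sub_pow_succ_div hb (log R) n
      ((lt_min hr₀ hR).trans_le hx.1)) ((hint (n + 1)).add ((hint n).const_mul ((n + 1) / b)))
  rw [integral_add (hint (n + 1)) ((hint n).const_mul _), integral_const_mul] at hFTC
  rw [eq_sub_iff_add_eq, hFTC, sub_self, zero_pow n.succ_ne_zero]
  ring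

lemma tendsto_integral_rpow_sub_one_div_rpow (hb : 0 < b) (r₀ : ℝ) :
    Tendsto (fun R => (∫ ρ in r₀..R, ρ ^ (b - 1)) / R ^ b) atTop (𝓝 (1 / b)) := by
  have h : Tendsto (fun R => 1 / b - r₀ ^ b / b / R ^ b) atTop (𝓝 (1 / b - 0)) :=
    tendsto_const_nhds.sub (tendsto_const_nhds.div_atTop (tendsto_rpow_atTop hb))
  rw [sub_zero] at h
  refine h.congr' ?_
  filter_upwards [eventually_gt_atTop 0] with R hR
  rw [integral_rpow (Or.inl (by linarith)), sub_add_cancel]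
  field_simp

theorem tendsto_integral_rpow_mul_log_sub_pow_div_rpow (hb : 0 < b) (hr₀ : 0 < r₀) (n : ℕ) :
    Tendsto (fun R => (∫ ρ in r₀..R, ρ ^ (b - 1) * (log ρ - log R) ^ n) / R ^ b) atTop
      (𝓝 ((-1) ^ n * n ! / b ^ (n + 1))) := by
  induction n with
  | zero => simpa using tendsto_integral_rpow_sub_one_div_rpow hb r₀
  | succ n ih =>
    have hboundary := (tendsto_log_sub_pow_div_rpow_atTop (log r₀) hb (n + 1)).const_mul
      (-(-1) ^ (n + 1) * r₀ ^ b / b)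
    have h := hboundary.add (ih.const_mul (-((n + 1) / b)))
    have hlim : -((n + 1) / b) * ((-1) ^ n * n ! / b ^ (n + 1)) =
        (-1) ^ (n + 1) * (n + 1)! / b ^ (n + 1 + 1) := by
      rw [Nat.factorial_succ]
      push_cast
      field_simp
      ring
    rw [mul_zero, zero_add, hlim] at h
    refine h.congr' ?_
    filter_upwards [eventually_gt_atTop 0] with R hR
    rw [integral_rpow_mul_log_sub_pow_succ hb.ne' hr₀ hR, ← neg_sub (log R),
      neg_pow (log R - log r₀)]
    ring

theorem tendsto_integral_rpow_mul_sum_log_sub_pow_div_rpow (hb : 0 < b) (hr₀ : 0 < r₀)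
    (s : Finset ℕ) (c : ℕ → ℝ) :
    Tendsto (fun R => (∫ ρ in r₀..R, ρ ^ (b - 1) * ∑ n ∈ s, c n * (log ρ - log R) ^ n) / R ^ b)
      atTop (𝓝 (∑ n ∈ s, c n * ((-1) ^ n * n ! / b ^ (n + 1)))) := by
  refine (tendsto_finsetSum s fun n _ =>
    (tendsto_integral_rpow_mul_log_sub_pow_div_rpow hb hr₀ n).const_mul (c n)).congr' ?_
  filter_upwards [eventually_gt_atTop 0] with R hR
  simp_rw [Finset.mul_sum, mul_left_comm _ (c _)]
  rw [integral_finsetSum fun n _ => (intervalIntegrable_of_continuousAt_pos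
    (fun x hx => by fun_prop (disch := simp [hx.ne'])) hr₀ hR).const_mul (c n)]
  simp_rw [integral_const_mul, Finset.sum_div, mul_div_assoc]

lemma tendsto_integral_rpow_sub_three_div_rpow (hb : 2 ≤ b) (hr₀ : 0 < r₀) :
    Tendsto (fun R => (∫ ρ in r₀..R, ρ ^ (b - 3)) / R ^ b) atTop (𝓝 0) := by
  refine squeeze_zero_norm' ?_ (tendsto_const_nhds.div_atTop
    (tendsto_id.const_mul_atTop hr₀) (f := fun _ => (1 : ℝ)))
  filter_upwards [eventually_ge_atTop r₀] with R hR
  have hR0 : 0 < R := hr₀.trans_le hR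
  have hbound : ‖∫ ρ in r₀..R, ρ ^ (b - 3)‖ ≤ R ^ (b - 2) / r₀ * |R - r₀| := by
    refine norm_integral_le_of_norm_le_const fun x hx => ?_
    rw [Set.uIoc_of_le hR] at hx
    have hx0 : 0 < x := hr₀.trans hx.1
    rw [norm_of_nonneg (by positivity), show b - 3 = b - 2 - 1 by ring, rpow_sub_one hx0.ne']
    exact div_le_div₀ (by positivity) (rpow_le_rpow hx0.le hx.2 (by linarith)) hr₀ hx.1.le
  calc ‖(∫ ρ in r₀..R, ρ ^ (b - 3)) / R ^ b‖
      = ‖∫ ρ in r₀..R, ρ ^ (b - 3)‖ / R ^ b := by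
        rw [norm_div, norm_of_nonneg (by positivity : 0 ≤ R ^ b)]
    _ ≤ R ^ (b - 2) / r₀ * R / R ^ b := by
        gcongr
        exact hbound.trans (by gcongr; rw [abs_of_nonneg (by linarith)]; linarith)
    _ = 1 / (r₀ * id R) := by
        have hRb : R ^ b = R ^ (b - 2) * R * R := by
          rw [← rpow_add_one hR0.ne', ← rpow_add_one hR0.ne']
          ring_nf
        rw [hRb, id]
        field_simp

end LogMoments

section LogProfile

variable {a r₀ R : ℝ} {d : ℕ}

lemma rpow_mul_log_profile_integrand_eq (hd : 1 ≤ d) (hr₀ : 0 < r₀) (hR : 0 < R) {ρ : ℝ}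
    (hρ : 0 < ρ) (L μ : ℝ) (s : Finset ℕ) (g : ℕ → ℝ) :
    r₀ ^ a * ((ρ / r₀) ^ a * ρ ^ (d - 1) *
        ((1 + ρ ^ 2 / L ^ 2) * μ ^ 2 / ρ ^ 2 + 2 * ∑ n ∈ s, g n * (μ * log (ρ / R)) ^ n)) =
      μ ^ 2 * ρ ^ (a + d - 3) + μ ^ 2 / L ^ 2 * ρ ^ (a + d - 1) +
        ρ ^ (a + d - 1) * ∑ n ∈ s, 2 * g n * μ ^ n * (log ρ - log R) ^ n := by
  have hweight : r₀ ^ a * (ρ / r₀) ^ a * ρ ^ (d - 1) = ρ ^ (a + d - 1) := by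
    rw [div_rpow hρ.le hr₀.le, ← rpow_natCast, Nat.cast_sub hd, add_sub_assoc, rpow_add hρ,
      Nat.cast_one]
    field_simp
  have hsplit : ρ ^ (a + d - 3) = ρ ^ (a + d - 1) / ρ ^ 2 := by
    rw [← rpow_natCast, ← rpow_sub hρ]
    ring_nf
  have hsum : 2 * ∑ n ∈ s, g n * (μ * (log ρ - log R)) ^ n =
      ∑ n ∈ s, 2 * g n * μ ^ n * (log ρ - log R) ^ n := by
    rw [Finset.mul_sum]
    exact Finset.sum_congr rfl fun n _ => by rw [mul_pow]; ring
  rw [← mul_assoc, ← mul_assoc, hweight, hsplit, log_div hρ.ne' hR.ne', hsum]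
  field_simp

lemma rpow_mul_integral_log_profile_eq (hd : 1 ≤ d) (hr₀ : 0 < r₀) (hR : 0 < R) (L μ : ℝ)
    (s : Finset ℕ) (g : ℕ → ℝ) :
    r₀ ^ a * ∫ ρ in r₀..R, (ρ / r₀) ^ a * ρ ^ (d - 1) *
        ((1 + ρ ^ 2 / L ^ 2) * μ ^ 2 / ρ ^ 2 + 2 * ∑ n ∈ s, g n * (μ * log (ρ / R)) ^ n) =
      μ ^ 2 * (∫ ρ in r₀..R, ρ ^ (a + d - 3)) + μ ^ 2 / L ^ 2 * (∫ ρ in r₀..R, ρ ^ (a + d - 1)) +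
        ∫ ρ in r₀..R, ρ ^ (a + d - 1) * ∑ n ∈ s, 2 * g n * μ ^ n * (log ρ - log R) ^ n := by
  rw [← integral_const_mul, integral_congr fun ρ hρ =>
      rpow_mul_log_profile_integrand_eq hd hr₀ hR ((lt_min hr₀ hR).trans_le hρ.1) L μ s g,
    integral_add, integral_add, integral_const_mul, integral_const_mul]
  all_goals
    apply_rules [IntervalIntegrable.add, IntervalIntegrable.const_mul,
      intervalIntegrable_of_continuousAt_pos]
    all_goals intro x hx; fun_prop (disch := simp [hx.ne'])

theorem tendsto_rpow_mul_integral_log_profile_div_rpow (hd : 1 ≤ d) (hb : 2 ≤ a + d)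
    (hr₀ : 0 < r₀) (L μ : ℝ) (s : Finset ℕ) (g : ℕ → ℝ) :
    Tendsto (fun R => r₀ ^ a * (∫ ρ in r₀..R, (ρ / r₀) ^ a * ρ ^ (d - 1) *
        ((1 + ρ ^ 2 / L ^ 2) * μ ^ 2 / ρ ^ 2 + 2 * ∑ n ∈ s, g n * (μ * log (ρ / R)) ^ n)) /
          R ^ (a + d)) atTop
      (𝓝 ((μ ^ 2 / L ^ 2 + 2 * ∑ n ∈ s, n ! * g n * (-μ / (a + d)) ^ n) / (a + d))) := by
  have hb0 : 0 < a + d := by linarith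
  have hlim : μ ^ 2 / L ^ 2 * (1 / (a + d)) +
      ∑ n ∈ s, 2 * g n * μ ^ n * ((-1) ^ n * n ! / (a + d) ^ (n + 1)) =
        (μ ^ 2 / L ^ 2 + 2 * ∑ n ∈ s, n ! * g n * (-μ / (a + d)) ^ n) / (a + d) := by
    rw [add_div, Finset.mul_sum, Finset.sum_div]
    congr 1
    · ring
    · refine Finset.sum_congr rfl fun n _ => ?_
      rw [neg_div, neg_pow (μ / (a + d)), div_pow]
      field_simp
      ring
  rw [← hlim]
  have h := (((tendsto_integral_rpow_sub_three_div_rpow hb hr₀).const_mul (μ ^ 2)).add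
    ((tendsto_integral_rpow_sub_one_div_rpow hb0 r₀).const_mul (μ ^ 2 / L ^ 2))).add
    (tendsto_integral_rpow_mul_sum_log_sub_pow_div_rpow hb0 hr₀ s fun n => 2 * g n * μ ^ n)
  rw [mul_zero, zero_add] at h
  refine h.congr' ?_
  filter_upwards [eventually_gt_atTop 0] with R hR
  rw [rpow_mul_integral_log_profile_eq hd hr₀ hR]
  ring

end LogProfile

theorem log_profile_mass_asymptotics_general
    (d : ℕ) (hd : 2 ≤ d) (L r₀ μ : ℝ) (hr₀ : 0 < r₀)
    (N : ℕ) (g : ℕ → ℝ)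
    (V : ℝ → ℝ) (hV : ∀ x, V x = ∑ n ∈ Finset.Icc 2 N, g n * x ^ n)
    (ω₀ lam : ℝ)
    (hlam : lam = (d : ℝ) * ((d : ℝ) - 1) + μ ^ 2)
    (ωinf : ℝ → ℝ)
    (hωinf : ∀ R₀, ωinf R₀ = (R₀ / r₀) ^ (-(μ ^ 2 / ((d : ℝ) - 1))) *
      (ω₀ + (1 / ((d : ℝ) - 1)) * ∫ ρ in r₀..R₀,
        (ρ / r₀) ^ (μ ^ 2 / ((d : ℝ) - 1)) * ρ ^ (d - 1) *
          ((1 + ρ ^ 2 / L ^ 2) * μ ^ 2 / ρ ^ 2 + 2 * V (μ * Real.log (ρ / R₀))))) :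
    Tendsto (fun R₀ : ℝ => lam * ωinf R₀ / R₀ ^ d) atTop
      (nhds (μ ^ 2 / L ^ 2 + 2 * ∑ n ∈ Finset.Icc 2 N,
        (n.factorial : ℝ) * g n *
          ((1 - (d : ℝ)) * μ / ((d : ℝ) * ((d : ℝ) - 1) + μ ^ 2)) ^ n)) := by
  have hd' : (2 : ℝ) ≤ d := by exact_mod_cast hd
  have hd1 : (d : ℝ) - 1 ≠ 0 := by linarith
  set a := μ ^ 2 / ((d : ℝ) - 1) with ha_def
  have ha : 0 ≤ a := div_nonneg (sq_nonneg μ) (by linarith)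
  have hb : 2 ≤ a + d := by linarith
  have hb0 : a + d ≠ 0 := by linarith
  have hlam' : lam = ((d : ℝ) - 1) * (a + d) := by
    rw [hlam, ha_def]
    field_simp
    ring
  have hx : (1 - (d : ℝ)) * μ / ((d : ℝ) * ((d : ℝ) - 1) + μ ^ 2) = -μ / (a + d) := by
    rw [← hlam, hlam']
    field_simp
    ring
  have hconst : Tendsto (fun R : ℝ => lam * ω₀ * r₀ ^ a / R ^ (a + d)) atTop (𝓝 0) :=
    tendsto_const_nhds.div_atTop (tendsto_rpow_atTop (by linarith))
  have hlim := hconst.add ((tendsto_rpow_mul_integral_log_profile_div_rpow (by omega) hb hr₀ L μ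
    (Finset.Icc 2 N) g).const_mul (a + d))
  rw [zero_add, mul_div_cancel₀ _ hb0, ← hx] at hlim
  simp only [hV] at hωinf
  refine hlim.congr' ?_
  filter_upwards [eventually_gt_atTop 0] with R hR
  rw [hωinf R, rpow_neg (by positivity), div_rpow hR.le hr₀.le, inv_div, rpow_add hR,
    rpow_natCast, hlam']
  generalize (∫ ρ in r₀..R, _ : ℝ) = I
  field_simp

theorem log_profile_mass_asymptotics
    (d : ℕ) (hd : 2 ≤ d) (L r₀ μ : ℝ) (hL : 0 < L) (hr₀ : 0 < r₀)
    (N : ℕ) (hN : 2 ≤ N) (g : ℕ → ℝ)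
    (V : ℝ → ℝ) (hV : ∀ x, V x = ∑ n ∈ Finset.Icc 2 N, g n * x ^ n)
    (ω₀ lam : ℝ)
    (hω₀ : ω₀ = r₀ ^ (d - 2) + r₀ ^ d / L ^ 2)
    (hlam : lam = (d : ℝ) * ((d : ℝ) - 1) + μ ^ 2)
    (ωinf : ℝ → ℝ)
    (hωinf : ∀ R₀, ωinf R₀ = (R₀ / r₀) ^ (-(μ ^ 2 / ((d : ℝ) - 1))) *
      (ω₀ + (1 / ((d : ℝ) - 1)) * ∫ ρ in r₀..R₀,
        (ρ / r₀) ^ (μ ^ 2 / ((d : ℝ) - 1)) * ρ ^ (d - 1) *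
          ((1 + ρ ^ 2 / L ^ 2) * μ ^ 2 / ρ ^ 2 + 2 * V (μ * Real.log (ρ / R₀))))) :
    Tendsto (fun R₀ : ℝ => lam * ωinf R₀ / R₀ ^ d) atTop
      (nhds (μ ^ 2 / L ^ 2 + 2 * ∑ n ∈ Finset.Icc 2 N,
        (n.factorial : ℝ) * g n *
          ((1 - (d : ℝ)) * μ / ((d : ℝ) * ((d : ℝ) - 1) + μ ^ 2)) ^ n)) :=
  log_profile_mass_asymptotics_general d hd L r₀ μ hr₀ N g V hV ω₀ lam hlam ωinf hωinf
end

section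
/- Let d ≥ 2 be an integer, L > 0, r₀ > 0, N ≥ 2 an integer, and let g₂, …, g_N be real couplings such that for some μ ∈ ℝ one has μ²/L² + 2 Σ_{n=2}^{N} n!·g_n·[ (1−d)μ / (d(d−1)+μ²) ]ⁿ < 0. Set ω₀ = r₀^{d−2} + r₀^{d}/L². Then there exists R₀* > r₀ such that for all R₀ > R₀*, the quantity ω_{R₀}(∞) = (R₀/r₀)^{−μ²/(d−1)} [ ω₀ + (1/(d−1)) ∫_{r₀}^{R₀} (ρ/r₀)^{μ²/(d−1)} ρ^{d−1} ( (1 + ρ²/L²)·μ²/ρ² + 2 Σ_{n=2}^{N} g_n (μ log(ρ/R₀))ⁿ ) dρ ] is strictly negative. -/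
/-!
Substituting `ρ = R t` shows that, divided by `R ^ γ` with `γ = μ² / (d - 1) + d`, the bracket
defining `ω_R(∞)` tends to `r₀ ^ (-μ² / (d - 1)) / (d - 1)` times
`∫₀¹ t ^ (γ - 1) (μ² / L² + 2 Σ gₙ (μ log t)ⁿ) dt`: the `ω₀` and `μ² / ρ²` terms are of lower order.
As `∫₀¹ t ^ (γ - 1) (log t)ⁿ dt = (-1)ⁿ n! / γ ^ (n + 1)` and `(1 - d) μ / (d (d - 1) + μ²) = -μ / γ`,
that integral is `γ⁻¹` times the expression assumed negative, while the prefactor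
`(R / r₀) ^ (-μ² / (d - 1))` is positive. The truncated integrals are evaluated through an explicit
primitive of `ρ ^ (γ - 1) (log (ρ / R))ⁿ`.
-/

open Real Filter Topology Asymptotics MeasureTheory
open scoped Nat

/-- `P n` solves `P' + γ P = yⁿ`, so `ρ ↦ ρ ^ γ * P n (log (ρ / R))` is a primitive of
`ρ ↦ ρ ^ (γ - 1) * log (ρ / R) ^ n`. -/
noncomputable def logPowPrimitive (γ : ℝ) : ℕ → ℝ → ℝ
  | 0 => fun _ => γ⁻¹
  | n + 1 => fun y => (y ^ (n + 1) - (n + 1) * logPowPrimitive γ n y) / γ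

namespace logPowPrimitive

variable {γ : ℝ}

theorem hasDerivAt (hγ : γ ≠ 0) (n : ℕ) (y : ℝ) :
    HasDerivAt (logPowPrimitive γ n) (y ^ n - γ * logPowPrimitive γ n y) y := by
  induction n generalizing y with
  | zero => exact (hasDerivAt_const y γ⁻¹).congr_deriv (by simp [logPowPrimitive, hγ])
  | succ n ih =>
    refine (((hasDerivAt_pow (n + 1) y).sub ((ih y).const_mul ((n : ℝ) + 1))).div_const γ)
      |>.congr_deriv ?_
    simp only [logPowPrimitive]
    field_simp
    push_cast
    ring

theorem apply_zero (γ : ℝ) (n : ℕ) :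
    logPowPrimitive γ n 0 = (-1) ^ n * n ! / γ ^ (n + 1) := by
  induction n with
  | zero => simp [logPowPrimitive]
  | succ n ih =>
    simp only [logPowPrimitive, ih, Nat.factorial_succ, zero_pow n.succ_ne_zero]
    push_cast
    ring

theorem isLittleO_comp_rpow (hγ : 0 < γ) {f : ℝ → ℝ} (hf : f =O[atTop] log) (n : ℕ) :
    (fun x => logPowPrimitive γ n (f x)) =o[atTop] fun x => x ^ γ := by
  have hpow (k : ℕ) : (fun x => f x ^ k) =o[atTop] fun x => x ^ γ :=
    (hf.pow k).trans_isLittleO <| (isLittleO_log_rpow_rpow_atTop k hγ).congr_left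
      fun x => rpow_natCast (log x) k
  induction n with
  | zero =>
    exact isLittleO_const_left.2 <| Or.inr <| tendsto_norm_atTop_atTop.comp <|
      tendsto_rpow_atTop hγ
  | succ n ih =>
    exact (((hpow (n + 1)).sub (ih.const_mul_left ((n : ℝ) + 1))).const_mul_left γ⁻¹).congr_left
      fun x => by simp only [logPowPrimitive]; ring

end logPowPrimitive

variable {γ a b R ρ : ℝ}

theorem hasDerivAt_rpow_mul_logPowPrimitive (hγ : γ ≠ 0) (hR : R ≠ 0) (hρ : 0 < ρ) (n : ℕ) :
    HasDerivAt (fun x => x ^ γ * logPowPrimitive γ n (log (x / R)))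
      (ρ ^ (γ - 1) * log (ρ / R) ^ n) ρ := by
  have hlog : HasDerivAt (fun x => log (x / R)) ρ⁻¹ ρ :=
    (((hasDerivAt_id' ρ).div_const R).log (div_ne_zero hρ.ne' hR)).congr_deriv (by field_simp)
  refine ((hasDerivAt_rpow_const (Or.inl hρ.ne')).mul
    ((logPowPrimitive.hasDerivAt hγ n _).comp ρ hlog)).congr_deriv ?_
  rw [Function.comp_apply, rpow_sub_one hρ.ne']
  field_simp
  ring

theorem intervalIntegrable_rpow_mul_log_div_pow (γ : ℝ) (ha : 0 < a) (hb : 0 < b) (hR : R ≠ 0)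
    (n : ℕ) : IntervalIntegrable (fun x => x ^ γ * log (x / R) ^ n) volume a b := by
  refine ContinuousOn.intervalIntegrable fun x hx => ?_
  have hx : x ≠ 0 := ((lt_min ha hb).trans_le hx.1).ne'
  exact ((continuousAt_id.rpow_const (Or.inl hx)).mul
    (((continuousAt_id.div_const R).log (div_ne_zero hx hR)).pow n)).continuousWithinAt

theorem integral_rpow_mul_log_div_pow (hγ : γ ≠ 0) (ha : 0 < a) (hb : 0 < b) (hR : R ≠ 0)
    (n : ℕ) :
    ∫ ρ in a..b, ρ ^ (γ - 1) * log (ρ / R) ^ n =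
      b ^ γ * logPowPrimitive γ n (log (b / R)) - a ^ γ * logPowPrimitive γ n (log (a / R)) :=
  intervalIntegral.integral_eq_sub_of_hasDerivAt
    (fun _ hx => hasDerivAt_rpow_mul_logPowPrimitive hγ hR ((lt_min ha hb).trans_le hx.1) n)
    (intervalIntegrable_rpow_mul_log_div_pow _ ha hb hR n)

theorem tendsto_integral_rpow_mul_log_div_pow_div_rpow (hγ : 0 < γ) (ha : 0 < a) (n : ℕ) :
    Tendsto (fun R => (∫ ρ in a..R, ρ ^ (γ - 1) * log (ρ / R) ^ n) / R ^ γ) atTop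
      (𝓝 ((-1) ^ n * n ! / γ ^ (n + 1))) := by
  have hlog : (fun R => log (a / R)) =O[atTop] log := by
    refine ((isLittleO_const_log_atTop (c := log a)).isBigO.sub (isBigO_refl log atTop)).congr'
      ?_ EventuallyEq.rfl
    filter_upwards [eventually_gt_atTop 0] with R hR
    rw [log_div ha.ne' hR.ne']
  have hsmall := (logPowPrimitive.isLittleO_comp_rpow hγ hlog n).tendsto_div_nhds_zero
  have hlim := (tendsto_const_nhds (x := logPowPrimitive γ n 0)).sub (hsmall.const_mul (a ^ γ))
  rw [mul_zero, sub_zero] at hlim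
  rw [← logPowPrimitive.apply_zero]
  refine hlim.congr' ?_
  filter_upwards [eventually_gt_atTop 0] with R hR
  rw [integral_rpow_mul_log_div_pow hγ.ne' ha hR hR.ne', div_self hR.ne', log_one]
  field_simp

theorem tendsto_integral_rpow_div_rpow (hγ : 0 < γ) (ha : 0 < a) :
    Tendsto (fun R => (∫ ρ in a..R, ρ ^ (γ - 1)) / R ^ γ) atTop (𝓝 γ⁻¹) := by
  simpa using tendsto_integral_rpow_mul_log_div_pow_div_rpow hγ ha 0

theorem tendsto_integral_rpow_div_rpow_of_lt {β : ℝ} (hβ : 0 < β) (hβγ : β < γ) (ha : 0 < a) :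
    Tendsto (fun R => (∫ ρ in a..R, ρ ^ (β - 1)) / R ^ γ) atTop (𝓝 0) := by
  have hlim := (tendsto_integral_rpow_div_rpow hβ ha).mul
    (tendsto_rpow_neg_atTop (sub_pos.2 hβγ))
  rw [mul_zero] at hlim
  refine hlim.congr' ?_
  filter_upwards [eventually_gt_atTop 0] with R hR
  rw [rpow_neg hR.le, show γ = β + (γ - β) by ring, rpow_add hR, add_sub_cancel_left]
  field_simp

/-- `(1 + ρ² / L²) φ'(ρ)² + 2 V(φ(ρ))` for the profile `φ(ρ) = μ log (ρ / R)` and the potential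
`V(φ) = Σ_{n ∈ s} gₙ φⁿ`. -/
noncomputable def scalarEnergyDensity (L μ : ℝ) (s : Finset ℕ) (g : ℕ → ℝ) (R ρ : ℝ) : ℝ :=
  (1 + ρ ^ 2 / L ^ 2) * μ ^ 2 / ρ ^ 2 + 2 * ∑ n ∈ s, g n * (μ * log (ρ / R)) ^ n

theorem rpow_sub_one_mul_scalarEnergyDensity (hρ : 0 < ρ) (L μ : ℝ) (s : Finset ℕ)
    (g : ℕ → ℝ) :
    ρ ^ (γ - 1) * scalarEnergyDensity L μ s g R ρ =
      μ ^ 2 * ρ ^ (γ - 2 - 1) + μ ^ 2 / L ^ 2 * ρ ^ (γ - 1) +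
        ∑ n ∈ s, 2 * g n * μ ^ n * (ρ ^ (γ - 1) * log (ρ / R) ^ n) := by
  have hsplit : ρ ^ (γ - 1) = ρ ^ (γ - 2 - 1) * ρ ^ 2 := by
    rw [← rpow_two, ← rpow_add hρ]
    ring_nf
  rw [hsplit, scalarEnergyDensity]
  simp only [mul_add, Finset.mul_sum, mul_pow]
  congr 1
  · field_simp
  · exact Finset.sum_congr rfl fun n _ => by ring

theorem tendsto_integral_rpow_mul_scalarEnergyDensity_div_rpow (hγ : 2 < γ) (ha : 0 < a)
    (L μ : ℝ) (s : Finset ℕ) (g : ℕ → ℝ) :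
    Tendsto (fun R => (∫ ρ in a..R, ρ ^ (γ - 1) * scalarEnergyDensity L μ s g R ρ) / R ^ γ)
      atTop (𝓝 ((μ ^ 2 / L ^ 2 + 2 * ∑ n ∈ s, n ! * g n * (-μ / γ) ^ n) / γ)) := by
  have hγ₀ : 0 < γ := by linarith
  have hlim := (((tendsto_integral_rpow_div_rpow_of_lt (sub_pos.2 hγ) (sub_lt_self γ two_pos)
    ha).const_mul (μ ^ 2)).add ((tendsto_integral_rpow_div_rpow hγ₀ ha).const_mul
      (μ ^ 2 / L ^ 2))).add (tendsto_finsetSum s fun n _ =>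
        (tendsto_integral_rpow_mul_log_div_pow_div_rpow hγ₀ ha n).const_mul (2 * g n * μ ^ n))
  convert hlim.congr' ?_ using 2
  · rw [mul_zero, zero_add, add_div, Finset.mul_sum, Finset.sum_div]
    congr 1
    refine Finset.sum_congr rfl fun n _ => ?_
    rw [neg_div, neg_pow, div_pow]
    field_simp
    ring
  filter_upwards [eventually_gt_atTop a] with R hR
  have hpos : ∀ x ∈ Set.uIcc a R, 0 < x := fun x hx => (lt_min ha (ha.trans hR)).trans_le hx.1
  have h0 : (0 : ℝ) ∉ Set.uIcc a R := fun h => (hpos 0 h).false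
  have hJ := (intervalIntegral.intervalIntegrable_rpow (μ := volume) (r := γ - 2 - 1)
    (Or.inr h0)).const_mul (μ ^ 2)
  have hI₀ := (intervalIntegral.intervalIntegrable_rpow (μ := volume) (r := γ - 1)
    (Or.inr h0)).const_mul (μ ^ 2 / L ^ 2)
  have hI (n : ℕ) := (intervalIntegrable_rpow_mul_log_div_pow (γ - 1) ha (ha.trans hR)
    (ha.trans hR).ne' n).const_mul (2 * g n * μ ^ n)
  rw [intervalIntegral.integral_congr fun x hx =>
      rpow_sub_one_mul_scalarEnergyDensity (hpos x hx) L μ s g,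
    intervalIntegral.integral_add (hJ.add hI₀)
      (by simpa only [Finset.sum_fn] using IntervalIntegrable.sum s fun n _ => hI n),
    intervalIntegral.integral_add hJ hI₀, intervalIntegral.integral_finsetSum fun n _ => hI n]
  simp only [intervalIntegral.integral_const_mul, Finset.sum_div, add_div, mul_div_assoc]

theorem integral_div_rpow_mul_pow_mul {r : ℝ} (hr : 0 < r) (hR : 0 < R) (α : ℝ) {d : ℕ}
    (hd : 1 ≤ d) (f : ℝ → ℝ) :
    ∫ ρ in r..R, (ρ / r) ^ α * ρ ^ (d - 1) * f ρ =
      r ^ (-α) * ∫ ρ in r..R, ρ ^ (α + d - 1) * f ρ := by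
  rw [← intervalIntegral.integral_const_mul]
  refine intervalIntegral.integral_congr fun ρ hρ => ?_
  have hρ : 0 < ρ := (lt_min hr hR).trans_le hρ.1
  rw [div_rpow hρ.le hr.le, rpow_neg hr.le, ← rpow_natCast, Nat.cast_sub hd, Nat.cast_one,
    add_sub_assoc, rpow_add hρ]
  field_simp

theorem tendsto_add_mul_integral_scalarEnergyDensity_div_rpow {r₀ α : ℝ} (hr₀ : 0 < r₀) {d : ℕ}
    (hd : 1 ≤ d) (hγ : 2 < α + d) (ω₀ k L μ : ℝ) (s : Finset ℕ) (g : ℕ → ℝ) :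
    Tendsto (fun R => (ω₀ + k * ∫ ρ in r₀..R,
        (ρ / r₀) ^ α * ρ ^ (d - 1) * scalarEnergyDensity L μ s g R ρ) / R ^ (α + d)) atTop
      (𝓝 (k * r₀ ^ (-α) *
        ((μ ^ 2 / L ^ 2 + 2 * ∑ n ∈ s, n ! * g n * (-μ / (α + d)) ^ n) / (α + d)))) := by
  have hlim := (tendsto_const_nhds (x := ω₀).div_atTop
    (tendsto_rpow_atTop (y := α + d) (by linarith))).add
    ((tendsto_integral_rpow_mul_scalarEnergyDensity_div_rpow hγ hr₀ L μ s g).const_mul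
      (k * r₀ ^ (-α)))
  rw [zero_add] at hlim
  refine hlim.congr' ?_
  filter_upwards [eventually_gt_atTop 0] with R hR
  rw [integral_div_rpow_mul_pow_mul hr₀ hR α hd]
  field_simp

theorem exists_gt_forall_gt_of_eventually_atTop {α : Type*} [LinearOrder α] [NoMaxOrder α]
    {p : α → Prop}
    (h : ∀ᶠ x in atTop, p x) (a : α) : ∃ b > a, ∀ x > b, p x := by
  have : Nonempty α := ⟨a⟩
  obtain ⟨b, hb⟩ := (h.and (eventually_gt_atTop a)).exists_forall_of_atTop
  exact ⟨b, (hb b le_rfl).2, fun x hx => (hb x hx.le).1⟩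

theorem analytic_sufficient_condition_for_negative_mass_general
    (d : ℕ) (hd : 2 ≤ d) (L r₀ : ℝ) (hr₀ : 0 < r₀)
    (N : ℕ) (g : ℕ → ℝ) (μ : ℝ)
    (hneg : μ ^ 2 / L ^ 2 + 2 * ∑ n ∈ Finset.Icc 2 N,
      (n.factorial : ℝ) * g n *
        ((1 - (d : ℝ)) * μ / ((d : ℝ) * ((d : ℝ) - 1) + μ ^ 2)) ^ n < 0)
    (ω₀ : ℝ)
    (ωinf : ℝ → ℝ)
    (hωinf : ∀ R₀, ωinf R₀ = (R₀ / r₀) ^ (-(μ ^ 2 / ((d : ℝ) - 1))) *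
      (ω₀ + (1 / ((d : ℝ) - 1)) * ∫ ρ in r₀..R₀,
        (ρ / r₀) ^ (μ ^ 2 / ((d : ℝ) - 1)) * ρ ^ (d - 1) *
          ((1 + ρ ^ 2 / L ^ 2) * μ ^ 2 / ρ ^ 2 +
            2 * ∑ n ∈ Finset.Icc 2 N, g n * (μ * Real.log (ρ / R₀)) ^ n))) :
    ∃ R₀star > r₀, ∀ R₀ > R₀star, ωinf R₀ < 0 := by
  have hd₂ : (2 : ℝ) ≤ d := by exact_mod_cast hd
  have hd₁ : (0 : ℝ) < d - 1 := by linarith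
  have hμ : μ ≠ 0 := by
    rintro rfl
    rw [Finset.sum_eq_zero fun n hn => by rw [mul_zero, zero_div, zero_pow (by grind), mul_zero]]
      at hneg
    simp at hneg
  set α := μ ^ 2 / ((d : ℝ) - 1) with hα
  have hγ : 2 < α + d := by linarith [show 0 < α from div_pos (by positivity) hd₁]
  have hbase : (1 - (d : ℝ)) * μ / ((d : ℝ) * ((d : ℝ) - 1) + μ ^ 2) = -μ / (α + d) := by
    rw [show (d : ℝ) * (d - 1) + μ ^ 2 = (d - 1) * (α + d) by rw [hα]; field_simp; ring]
    field_simp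
    ring
  rw [hbase] at hneg
  have hlim := tendsto_add_mul_integral_scalarEnergyDensity_div_rpow hr₀ (by omega) hγ ω₀
    (1 / ((d : ℝ) - 1)) L μ (Finset.Icc 2 N) g
  have hlim_neg := mul_neg_of_pos_of_neg (mul_pos (one_div_pos.2 hd₁)
    (rpow_pos_of_pos hr₀ (-α))) (div_neg_of_neg_of_pos hneg (by linarith : (0 : ℝ) < α + d))
  refine exists_gt_forall_gt_of_eventually_atTop ?_ r₀
  filter_upwards [hlim.eventually_lt_const hlim_neg, eventually_gt_atTop 0] with R hbracket hR
  rw [hωinf]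
  exact mul_neg_of_pos_of_neg (by positivity) (neg_of_div_neg_left hbracket (by positivity))

theorem analytic_sufficient_condition_for_negative_mass
    (d : ℕ) (hd : 2 ≤ d) (L r₀ : ℝ) (hL : 0 < L) (hr₀ : 0 < r₀)
    (N : ℕ) (hN : 2 ≤ N) (g : ℕ → ℝ) (μ : ℝ)
    (hneg : μ ^ 2 / L ^ 2 + 2 * ∑ n ∈ Finset.Icc 2 N,
      (n.factorial : ℝ) * g n *
        ((1 - (d : ℝ)) * μ / ((d : ℝ) * ((d : ℝ) - 1) + μ ^ 2)) ^ n < 0)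
    (ω₀ : ℝ) (hω₀ : ω₀ = r₀ ^ (d - 2) + r₀ ^ d / L ^ 2)
    (ωinf : ℝ → ℝ)
    (hωinf : ∀ R₀, ωinf R₀ = (R₀ / r₀) ^ (-(μ ^ 2 / ((d : ℝ) - 1))) *
      (ω₀ + (1 / ((d : ℝ) - 1)) * ∫ ρ in r₀..R₀,
        (ρ / r₀) ^ (μ ^ 2 / ((d : ℝ) - 1)) * ρ ^ (d - 1) *
          ((1 + ρ ^ 2 / L ^ 2) * μ ^ 2 / ρ ^ 2 +
            2 * ∑ n ∈ Finset.Icc 2 N, g n * (μ * Real.log (ρ / R₀)) ^ n))) :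
    ∃ R₀star > r₀, ∀ R₀ > R₀star, ωinf R₀ < 0 :=
  analytic_sufficient_condition_for_negative_mass_general d hd L r₀ hr₀ N g μ hneg ω₀ ωinf hωinf
end

section
/- Let V(φ) = −(9/16)φ² + 9φ³ + 11φ⁴. There is no differentiable function W : ℝ → ℝ with W′(0) = 0 such that V(φ) = 3 + 2·W′(φ)² − 3·W(φ)² for all φ ∈ ℝ. -/
/-!
The obstruction lies at `φ < 0`, so put `w t = W (-t)`: then `V (-t) = 3 + 2 w' ^ 2 - 3 w ^ 2`,
which forces `3 w ^ 2 ≥ 3 - V (-t)` and `w 0 ^ 2 = 1`. The cubic `P t = 1 + t / 100 + 7 t ^ 2 / 10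
- 3 t ^ 3 / 4` is a strict supersolution on `[0, 1/2]` (`V (-t) < 3 + 2 P' ^ 2 - 3 P ^ 2`,
`P P' > 0`), so by the fencing theorem `w ^ 2 ≤ P ^ 2` there. But `3 P (1/2) ^ 2 < 3 - V (-1/2)`,
contradicting the lower bound at `t = 1/2`.
-/

open Set

/-- Where `w ^ 2` meets `P ^ 2`, the equation gives `((w ^ 2)') ^ 2 = 2 P ^ 2 (3 P ^ 2 - 3 + U)`,
which `hbarrier` makes smaller than `((P ^ 2)') ^ 2`; so `w ^ 2` can never overtake `P ^ 2`. -/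
theorem sq_le_sq_of_superpotential_barrier {U w w' P P' : ℝ → ℝ} {a b : ℝ}
    (hw : ∀ t ∈ Icc a b, HasDerivAt w (w' t) t)
    (hU : ∀ t ∈ Ico a b, U t = 3 + 2 * w' t ^ 2 - 3 * w t ^ 2)
    (hP : ∀ t, HasDerivAt P (P' t) t) (ha : w a ^ 2 ≤ P a ^ 2)
    (hPP' : ∀ t ∈ Ico a b, 0 < P t * P' t)
    (hbarrier : ∀ t ∈ Ico a b, U t < 3 + 2 * P' t ^ 2 - 3 * P t ^ 2) :
    ∀ t ∈ Icc a b, w t ^ 2 ≤ P t ^ 2 := by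
  refine image_le_of_deriv_right_lt_deriv_boundary (f := fun t => w t ^ 2) (B := fun t => P t ^ 2)
    (f' := fun t => 2 * w t * w' t)
    (B' := fun t => 2 * P t * P' t)
    (fun t ht => ((hw t ht).pow 2).continuousAt.continuousWithinAt)
    (fun t ht => ?_) ha (fun t => ?_) (fun t ht hmeet => ?_)
  · simpa using ((hw t (Ico_subset_Icc_self ht)).fun_pow 2).hasDerivWithinAt
  · simpa using (hP t).fun_pow 2
  · have hP0 : P t ≠ 0 := left_ne_zero_of_mul (hPP' t ht).ne'
    have hsq : (2 * w t * w' t) ^ 2 < (2 * P t * P' t) ^ 2 :=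
      calc (2 * w t * w' t) ^ 2 = 2 * P t ^ 2 * (3 * P t ^ 2 - 3 + U t) := by
            rw [hU t ht, ← hmeet]; ring
        _ < 2 * P t ^ 2 * (2 * P' t ^ 2) := by gcongr; linarith [hbarrier t ht]
        _ = (2 * P t * P' t) ^ 2 := by ring
    exact (abs_lt.mp (abs_lt_of_sq_lt_sq hsq (by linarith [hPP' t ht]))).2

noncomputable section

def potential (φ : ℝ) : ℝ := -(9 / 16) * φ ^ 2 + 9 * φ ^ 3 + 11 * φ ^ 4

def barrier (t : ℝ) : ℝ := 1 + t / 100 + 7 / 10 * t ^ 2 - 3 / 4 * t ^ 3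

def barrierDeriv (t : ℝ) : ℝ := 1 / 100 + 7 / 5 * t - 9 / 4 * t ^ 2

end

theorem hasDerivAt_barrier (t : ℝ) : HasDerivAt barrier (barrierDeriv t) t :=
  (((((hasDerivAt_id' t).div_const 100).const_add 1).fun_add
    ((hasDerivAt_pow 2 t).const_mul (7 / 10))).fun_sub
    ((hasDerivAt_pow 3 t).const_mul (3 / 4))).congr_deriv (by simp only [barrierDeriv]; ring)

theorem barrier_mul_barrierDeriv_pos {t : ℝ} (ht : t ∈ Icc 0 (1 / 2)) :
    0 < barrier t * barrierDeriv t := by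
  obtain ⟨h0, h1⟩ := ht
  have hP : 0 < barrier t := by
    unfold barrier; nlinarith [pow_nonneg h0 3, mul_nonneg (sq_nonneg t) (sub_nonneg.2 h1)]
  have hP' : 0 < barrierDeriv t := by unfold barrierDeriv; nlinarith
  positivity

/-- Expanded, `3 - 3 P ^ 2 + 2 P' ^ 2 - V (-t) = (1 - 10 t) ^ 2 / 5000 + t ^ 2 R t` with `R > 0` on
`[0, 1/2]`. -/
theorem potential_neg_lt_barrier {t : ℝ} (ht : t ∈ Icc 0 (1 / 2)) :
    potential (-t) < 3 + 2 * barrierDeriv t ^ 2 - 3 * barrier t ^ 2 := by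
  obtain ⟨h0, h1⟩ := ht
  unfold potential barrier barrierDeriv
  nlinarith [sq_nonneg (1 - 10 * t), mul_nonneg h0 (sub_nonneg.2 h1), pow_nonneg h0 3,
    mul_nonneg (pow_nonneg h0 3) (sub_nonneg.2 h1)]

theorem barrier_half_sq_lt : 3 * barrier (1 / 2) ^ 2 < 3 - potential (-(1 / 2)) := by
  norm_num [barrier, potential]

theorem no_global_superpotential :
    ¬ ∃ W : ℝ → ℝ, Differentiable ℝ W ∧ deriv W 0 = 0 ∧
      ∀ φ : ℝ, -(9 / 16) * φ ^ 2 + 9 * φ ^ 3 + 11 * φ ^ 4 =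
        3 + 2 * deriv W φ ^ 2 - 3 * W φ ^ 2 := by
  rintro ⟨W, hW, hW0, hV⟩
  have hw : ∀ t, HasDerivAt (fun t => W (-t)) (-deriv W (-t)) t := fun t =>
    ((hW (-t)).hasDerivAt.comp t (hasDerivAt_neg t)).congr_deriv (by ring)
  have hU : ∀ t, potential (-t) = 3 + 2 * (-deriv W (-t)) ^ 2 - 3 * W (-t) ^ 2 := fun t => by
    rw [neg_sq]; exact hV (-t)
  have hW0sq : W 0 ^ 2 = 1 := by have := hV 0; rw [hW0] at this; linarith
  have hle := sq_le_sq_of_superpotential_barrier (fun t _ => hw t) (fun t _ => hU t)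
    hasDerivAt_barrier (by norm_num [hW0sq, barrier])
    (fun t ht => barrier_mul_barrierDeriv_pos (Ico_subset_Icc_self ht))
    (fun t ht => potential_neg_lt_barrier (Ico_subset_Icc_self ht)) (1 / 2) ⟨by norm_num, le_rfl⟩
  linarith [hU (1 / 2), barrier_half_sq_lt, sq_nonneg (deriv W (-(1 / 2)))]
end

section
/- Let d = 3, L = 1, V(φ) = −(9/16)φ² + 9φ³ + 11φ⁴, Δ = 3/2 + 3/(2√2), r₀ = 2.5, and ω₀ = r₀ + r₀³. Define φ(r) = (3.8/r)^Δ · [ −1 + (3.2/r)² − (2.4/r)⁴ ] for r ≥ r₀, h(r) = (1/2) ∫_{r₀}^{r} ρ·φ′(ρ)² dρ, χ(r) = (1 + r²)·φ′(r)² + 2V(φ(r)), and ω(r) = e^{−h(r)} [ ω₀ + (1/2) ∫_{r₀}^{r} e^{h(ρ)} ρ² χ(ρ) dρ ]. Then ω(r) < r + r³ for every r > r₀. -/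
open Set Real Filter intervalIntegral

/-!
Put `G r = exp (h r) * (r + r³) - ω₀ - ½ ∫_{r₀}^r exp (h ρ) ρ² χ ρ`, so that `ω r < r + r³` is
`0 < G r`, and `G r₀ = 0`. Since `h' = ½ r φ'²`, the kinetic terms cancel in
`G' = exp h * (1 + 3 r² - r² V(φ))`. For `r ≥ r₀` the profile `φ` takes values in `[-1, 0]`
(its prefactor `(3.8 / r) ^ Δ` is at most `max 1 ((3.8 / r)³)` because `0 ≤ Δ ≤ 3`), and there
`V ≤ 2`, so `G` is strictly increasing on `[r₀, ∞)`.
-/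

section IntegratingFactor

variable {a b : ℝ}

theorem hasDerivAt_integral_of_continuousOn_Icc {g : ℝ → ℝ} (hg : ContinuousOn g (Icc a b))
    {x : ℝ} (hx : x ∈ Ioo a b) : HasDerivAt (fun y => ∫ t in a..y, g t) (g x) x :=
  integral_hasDerivAt_right
    ((hg.mono (Icc_subset_Icc_right hx.2.le)).intervalIntegrable_of_Icc hx.1.le)
    (hg.mono Ioo_subset_Icc_self |>.stronglyMeasurableAtFilter isOpen_Ioo x hx)
    (hg.continuousAt (Icc_mem_nhds hx.1 hx.2))

theorem continuousOn_primitive_of_continuousOn_Icc {g : ℝ → ℝ} (hab : a ≤ b)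
    (hg : ContinuousOn g (Icc a b)) :
    ContinuousOn (fun y => ∫ t in a..y, g t) (Icc a b) := by
  simpa only [uIcc_of_le hab] using
    continuousOn_primitive_interval' (hg.intervalIntegrable_of_Icc hab) left_mem_uIcc

/-- The left-hand side is the solution of `ω' + p ω = q`, `ω a = ω₀`, obtained with the
integrating factor `exp h`; it stays below any strict supersolution `f`. -/
theorem integratingFactor_lt_of_supersolution {ω₀ : ℝ} {p q f f' h : ℝ → ℝ} (hab : a < b)
    (hp : ContinuousOn p (Icc a b)) (hq : ContinuousOn q (Icc a b))
    (hh : ∀ x ∈ Icc a b, h x = ∫ t in a..x, p t)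
    (hfc : ContinuousOn f (Icc a b)) (hf : ∀ x ∈ Ioo a b, HasDerivAt f (f' x) x)
    (hω₀ : ω₀ ≤ f a) (hsuper : ∀ x ∈ Ioo a b, q x < f' x + p x * f x) :
    exp (-h b) * (ω₀ + ∫ t in a..b, exp (h t) * q t) < f b := by
  have hhc : ContinuousOn h (Icc a b) :=
    (continuousOn_primitive_of_continuousOn_Icc hab.le hp).congr hh
  have hgc : ContinuousOn (fun t => exp (h t) * q t) (Icc a b) := (hhc.rexp).mul hq
  set G : ℝ → ℝ := fun x => exp (h x) * f x - ∫ t in a..x, exp (h t) * q t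
  have hG : ∀ x ∈ Ioo a b, HasDerivAt G (exp (h x) * (f' x + p x * f x - q x)) x := by
    intro x hx
    have hh' : HasDerivAt h (p x) x :=
      (hasDerivAt_integral_of_continuousOn_Icc hp hx).congr_of_eventuallyEq
        (eventually_of_mem (Icc_mem_nhds hx.1 hx.2) hh)
    exact ((hh'.exp.mul (hf x hx)).sub
      (hasDerivAt_integral_of_continuousOn_Icc hgc hx)).congr_deriv (by ring)
  have hmono : StrictMonoOn G (Icc a b) := by
    refine strictMonoOn_of_deriv_pos (convex_Icc a b) ((hhc.rexp.mul hfc).sub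
      (continuousOn_primitive_of_continuousOn_Icc hab.le hgc)) fun x hx => ?_
    rw [interior_Icc] at hx
    rw [(hG x hx).deriv]
    exact mul_pos (exp_pos _) (by linarith [hsuper x hx])
  have hGa : G a = f a := by simp [G, hh a (left_mem_Icc.2 hab.le)]
  have hGab := hmono (left_mem_Icc.2 hab.le) (right_mem_Icc.2 hab.le) hab
  rw [hGa] at hGab
  calc exp (-h b) * (ω₀ + ∫ t in a..b, exp (h t) * q t)
      < exp (-h b) * (exp (h b) * f b) := by
        gcongr
        simp only [G] at hGab
        linarith
    _ = f b := by rw [← mul_assoc, ← exp_add, neg_add_cancel, exp_zero, one_mul]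

end IntegratingFactor

noncomputable def scalarProfile (Δ r : ℝ) : ℝ :=
  (3.8 / r) ^ Δ * (-1 + (3.2 / r) ^ 2 - (2.4 / r) ^ 4)

theorem contDiffOn_scalarProfile (Δ : ℝ) : ContDiffOn ℝ 1 (scalarProfile Δ) (Ioi 0) := by
  intro r (hr : 0 < r)
  unfold scalarProfile
  fun_prop (disch := first | exact Or.inl (by positivity : (3.8/r) ≠ 0) | positivity)

theorem bracket_mem_Icc {r : ℝ} (hr : 9 / 5 ≤ r) :
    -1 + (3.2 / r) ^ 2 - (2.4 / r) ^ 4 ∈ Icc (-1) 0 := by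
  have hr0 : 0 < r := by linarith
  set u := (2.4 / r) ^ 2 with hu
  have h32 : (3.2 / r) ^ 2 = 16 / 9 * u := by rw [hu]; field_simp; norm_num
  have hu0 : 0 ≤ u := by positivity
  have hu1 : u ≤ 16 / 9 := by
    rw [hu, div_pow, div_le_iff₀ (by positivity)]; nlinarith
  rw [h32, show (2.4 / r) ^ 4 = u ^ 2 by rw [hu]; ring]
  constructor <;> nlinarith [sq_nonneg (u - 8 / 9)]

theorem neg_one_le_cube_mul_bracket {r : ℝ} (hr : 2.5 ≤ r) :
    -1 ≤ (3.8 / r) ^ 3 * (-1 + (3.2 / r) ^ 2 - (2.4 / r) ^ 4) := by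
  have hr0 : 0 < r := by linarith
  have hs : (6.25 : ℝ) ≤ r ^ 2 := by nlinarith
  have hpoly : (3.8 : ℝ) ^ 3 * ((r ^ 2) ^ 2 - 3.2 ^ 2 * r ^ 2 + 2.4 ^ 4) ≤ r ^ 7 := by
    nlinarith [mul_nonneg (sub_nonneg.2 hs) (sq_nonneg (r ^ 2 - 8)),
      mul_nonneg (sub_nonneg.2 hs) (sq_nonneg (r ^ 2 - 6.25)),
      mul_le_mul_of_nonneg_left hr (pow_nonneg hr0.le 6)]
  have e : (3.8 / r) ^ 3 * (-1 + (3.2 / r) ^ 2 - (2.4 / r) ^ 4)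
      = -((3.8 : ℝ) ^ 3 * ((r ^ 2) ^ 2 - 3.2 ^ 2 * r ^ 2 + 2.4 ^ 4)) / r ^ 7 := by
    field_simp; ring
  rw [e, le_div_iff₀ (by positivity)]
  linarith

theorem potential_le_two {x : ℝ} (hx : x ∈ Icc (-1) 0) :
    -(9 / 16) * x ^ 2 + 9 * x ^ 3 + 11 * x ^ 4 ≤ 2 := by
  obtain ⟨h1, h2⟩ := hx
  nlinarith [mul_nonneg (mul_nonneg (neg_nonneg.2 h2) (sq_nonneg x)) (by linarith : 0 ≤ x + 1),
    sq_nonneg x]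

theorem scalarProfile_mem_Icc {Δ r : ℝ} (hΔ₀ : 0 ≤ Δ) (hΔ₃ : Δ ≤ 3) (hr : 2.5 ≤ r) :
    scalarProfile Δ r ∈ Icc (-1) 0 := by
  have hx : 0 < 3.8 / r := by positivity
  obtain ⟨hB₁, hB₀⟩ := bracket_mem_Icc (by linarith : (9 / 5 : ℝ) ≤ r)
  refine ⟨?_, mul_nonpos_of_nonneg_of_nonpos (rpow_nonneg hx.le _) hB₀⟩
  rcases le_total (3.8 / r) 1 with hle | hge
  · have hA : (3.8 / r) ^ Δ ≤ 1 := rpow_le_one hx.le hle hΔ₀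
    unfold scalarProfile
    nlinarith [rpow_nonneg hx.le Δ]
  · have hA : (3.8 / r) ^ Δ ≤ (3.8 / r) ^ 3 := by
      simpa using rpow_le_rpow_of_exponent_le hge hΔ₃
    unfold scalarProfile
    nlinarith [neg_one_le_cube_mul_bracket hr]

theorem mass_lt_of_sq_mul_potential_lt {a b ω₀ : ℝ} {V φ ψ h χ : ℝ → ℝ} (hab : a < b)
    (hω₀ : ω₀ ≤ a + a ^ 3) (hV : Continuous V)
    (hφ : ContinuousOn φ (Icc a b)) (hψ : ContinuousOn ψ (Icc a b))
    -- `deriv φ a` also depends on `φ` left of `a`, hence the continuous stand-in `ψ`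
    (hφψ : ∀ x ∈ Ioc a b, deriv φ x = ψ x)
    (hpot : ∀ x ∈ Ioo a b, x ^ 2 * V (φ x) < 1 + 3 * x ^ 2)
    (hh : ∀ r ∈ Icc a b, h r = (1 / 2) * ∫ ρ in a..r, ρ * deriv φ ρ ^ 2)
    (hχ : ∀ r ∈ Ioc a b, χ r = (1 + r ^ 2) * deriv φ r ^ 2 + 2 * V (φ r)) :
    exp (-h b) * (ω₀ + (1 / 2) * ∫ ρ in a..b, exp (h ρ) * ρ ^ 2 * χ ρ) < b + b ^ 3 := by
  set p : ℝ → ℝ := fun ρ => ρ * ψ ρ ^ 2 / 2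
  set q : ℝ → ℝ := fun ρ => ρ ^ 2 * ((1 + ρ ^ 2) * ψ ρ ^ 2 + 2 * V (φ ρ)) / 2
  have hhp : ∀ x ∈ Icc a b, h x = ∫ t in a..x, p t := by
    intro x hx
    rw [hh x hx, ← integral_const_mul]
    refine integral_congr_ae (Eventually.of_forall fun t ht => ?_)
    rw [uIoc_of_le hx.1] at ht
    simp only [p, hφψ t ⟨ht.1, ht.2.trans hx.2⟩]
    ring
  have hq : (1 / 2) * ∫ ρ in a..b, exp (h ρ) * ρ ^ 2 * χ ρ = ∫ ρ in a..b, exp (h ρ) * q ρ := by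
    rw [← integral_const_mul]
    refine integral_congr_ae (Eventually.of_forall fun t ht => ?_)
    rw [uIoc_of_le hab.le] at ht
    simp only [q, hχ t ht, hφψ t ht]
    ring
  have hpc : ContinuousOn p (Icc a b) := by fun_prop
  have hqc : ContinuousOn q (Icc a b) := by fun_prop
  rw [hq]
  refine integratingFactor_lt_of_supersolution (f := fun x => x + x ^ 3)
    (f' := fun x => 1 + 3 * x ^ 2) hab hpc hqc hhp (by fun_prop)
    (fun x _ => ((hasDerivAt_id x).add (hasDerivAt_pow 3 x)).congr_deriv (by simp)) hω₀
    fun x hx => ?_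
  have hcancel : 1 + 3 * x ^ 2 + p x * (x + x ^ 3) - q x = 1 + 3 * x ^ 2 - x ^ 2 * V (φ x) := by
    simp only [p, q]; ring
  linarith [hpot x hx]

theorem explicit_dataset_outermost_minimal
    (r₀ Δ ω₀ : ℝ) (hr₀ : r₀ = 2.5)
    (hΔ : Δ = 3 / 2 + 3 / (2 * Real.sqrt 2))
    (hω₀ : ω₀ = r₀ + r₀ ^ 3)
    (V φ h χ ω : ℝ → ℝ)
    (hV : ∀ x, V x = -(9 / 16) * x ^ 2 + 9 * x ^ 3 + 11 * x ^ 4)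
    (hφ : ∀ r ≥ r₀, φ r = (3.8 / r) ^ Δ * (-1 + (3.2 / r) ^ 2 - (2.4 / r) ^ 4))
    (hh : ∀ r, h r = (1 / 2) * ∫ ρ in r₀..r, ρ * deriv φ ρ ^ 2)
    (hχ : ∀ r, χ r = (1 + r ^ 2) * deriv φ r ^ 2 + 2 * V (φ r))
    (hω : ∀ r, ω r = Real.exp (-h r) *
      (ω₀ + (1 / 2) * ∫ ρ in r₀..r, Real.exp (h ρ) * ρ ^ 2 * χ ρ)) :
    ∀ r > r₀, ω r < r + r ^ 3 := by
  intro r hr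
  subst hr₀
  have hΔ₀ : 0 ≤ Δ := hΔ ▸ by positivity
  have hΔ₃ : Δ ≤ 3 := by
    have : 3 / (2 * √2) ≤ 3 / 2 := by
      gcongr; nlinarith [one_le_sqrt.2 (by norm_num : (1 : ℝ) ≤ 2)]
    linarith
  have hVc : Continuous V := by rw [show V = _ from funext hV]; fun_prop
  have hsmooth := contDiffOn_scalarProfile Δ
  have hpos : Icc 2.5 r ⊆ Ioi (0 : ℝ) := fun x hx => lt_of_lt_of_le (by norm_num) hx.1
  rw [hω r]
  refine mass_lt_of_sq_mul_potential_lt hr hω₀.le hVc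
    ((hsmooth.continuousOn.mono hpos).congr fun x hx => hφ x hx.1)
    ((hsmooth.continuousOn_deriv_of_isOpen isOpen_Ioi le_rfl).mono hpos)
    (fun x hx => EventuallyEq.deriv_eq
      (eventually_of_mem (Ioi_mem_nhds hx.1) fun y hy => hφ y (le_of_lt hy)))
    (fun x hx => ?_) (fun x _ => hh x) (fun x _ => hχ x)
  have := potential_le_two (scalarProfile_mem_Icc hΔ₀ hΔ₃ hx.1.le)
  rw [hV, show φ x = scalarProfile Δ x from hφ x hx.1.le]
  nlinarith [sq_nonneg x]
end
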